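/- arXiv:math/9712258 — 2 statements merged into one kernel-verified Lean document; each statement's English description precedes it below -/
import Mathlib

section
/- For every ζ ∈ S∞, ℓ_u(ζ) = |{(i,j) ∈ up(ζ)×dw(ζ) : i > j}| − |{(i,j) ∈ ζ⁻¹(up(ζ))×ζ⁻¹(dw(ζ)) : i > j}| − |{(i,j) ∈ ζ⁻¹(up(ζ))×ζ⁻¹(up(ζ)) : i < j and ζ(i) > ζ(j)}| − |{(i,j) ∈ ζ⁻¹(dw(ζ))×ζ⁻¹(dw(ζ)) : i < j and ζ(i) > ζ(j)}|. -/
/-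
Common definitions for "A Monoid for the universal k-Bruhat order"
(Bergeron–Sottile).

`S∞` is modeled as `Equiv.Perm ℕ+`; membership in `S∞` (finite support)
is the predicate `FinSupp`.
-/

noncomputable section

open scoped Classical

/-- `S∞`: permutations of the positive integers `{1,2,3,...}`. -/
abbrev Sinf : Type := Equiv.Perm ℕ+

/-- A permutation belongs to `S∞` iff it moves only finitely many points. -/
def FinSupp (w : Sinf) : Prop := {i : ℕ+ | w i ≠ i}.Finite

/-- `ℓ(w)`: the number of inversions, i.e. pairs `i < j` with `w i > w j`. -/
def len (w : Sinf) : ℕ := {p : ℕ+ × ℕ+ | p.1 < p.2 ∧ w p.2 < w p.1}.ncard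

/-- The cover relation of the `k`-Bruhat order: `w` covers `u` iff
`ℓ(w) = ℓ(u) + 1` and `w = u·(a b)` for some `a ≤ k < b`. -/
def kCover (k : ℕ+) (u w : Sinf) : Prop :=
  len w = len u + 1 ∧ ∃ a b : ℕ+, a ≤ k ∧ k < b ∧ w = u * Equiv.swap a b

/-- The `k`-Bruhat order `≤ₖ`: the partial order generated by `kCover`. -/
def kBruhat (k : ℕ+) : Sinf → Sinf → Prop := Relation.ReflTransGen (kCover k)

/-- `ℓᵤ(ζ) = ℓ(ζu) − ℓ(u)` for any (some chosen) `u ∈ S∞`, `k` with `u ≤ₖ ζu`. -/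
def ellU (ζ : Sinf) : ℕ :=
  if h : ∃ p : Sinf × ℕ+, FinSupp p.1 ∧ kBruhat p.2 p.1 (ζ * p.1) then
    len (ζ * h.choose.1) - len h.choose.1
  else 0

/-- `ℚ[S∞]` as a `ℚ`-vector space with basis the permutations. -/
abbrev QS : Type := Sinf →₀ ℚ

/-- The operator `û_{αβ}` on `ℚ[S∞]`: on a basis permutation `ζ` it gives
`(α β)·ζ` if `ℓᵤ((α β)ζ) = ℓᵤ(ζ) + 1`, and `0` otherwise. -/
def uhat (α β : ℕ+) : QS →ₗ[ℚ] QS :=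
  Finsupp.lsum ℚ (fun ζ : Sinf =>
    LinearMap.toSpanSingleton ℚ QS
      (if ellU (Equiv.swap α β * ζ) = ellU ζ + 1 then
        Finsupp.single (Equiv.swap α β * ζ) (1 : ℚ)
      else 0))

/-- Index type for the generators `u_{αβ}`, `0 < α < β`. -/
abbrev Gen : Type := {p : ℕ+ × ℕ+ // p.1 < p.2}

/-- For `L = [(α₁,β₁),…,(αₙ,βₙ)]`, the composition `û_{αₙβₙ}∘⋯∘û_{α₁β₁}`
(the operator `û_{α₁β₁}` acts first). -/
def wordOp (L : List Gen) : QS →ₗ[ℚ] QS :=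
  L.foldl (fun f p => (uhat p.val.1 p.val.2).comp f) LinearMap.id

/-- The universal `k`-Bruhat order `≼`. -/
def uBruhat (η ζ : Sinf) : Prop :=
  ∃ u : Sinf, FinSupp u ∧ ∃ k : ℕ+, kBruhat k u (η * u) ∧ kBruhat k (η * u) (ζ * u)

/-- `ζ` covers `η` in `≼`. -/
def uCover (η ζ : Sinf) : Prop :=
  uBruhat η ζ ∧ η ≠ ζ ∧ ∀ ξ : Sinf, uBruhat η ξ → uBruhat ξ ζ → ξ = η ∨ ξ = ζ

/-- `up(ζ) = {j : ζ⁻¹(j) < j}`. -/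
def upS (ζ : Sinf) : Set ℕ+ := {j | ζ⁻¹ j < j}

/-- `dw(ζ) = {j : ζ⁻¹(j) > j}`. -/
def dwS (ζ : Sinf) : Set ℕ+ := {j | j < ζ⁻¹ j}

/-- `R_u(ζ)`: the `u`-reduced sequences for `ζ`, i.e. sequences
`((α₁,β₁),…,(αₙ,βₙ))` with `û_{αₙβₙ}∘⋯∘û_{α₁β₁}(1) = ζ`. -/
def Rset (ζ : Sinf) : Set (List Gen) :=
  {L | wordOp L (Finsupp.single 1 1) = Finsupp.single ζ 1}

/-- `H_p(ζ)`: empty if some `pᵢ < 0`; otherwise those `u`-reduced sequences for `ζ`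
whose `α`'s strictly increase within each consecutive block of sizes `p₁,…,p_r`
(indices `i, i+1` lie in the same block iff `i+1` is not a partial sum of `p`). -/
def Hset (p : List ℤ) (ζ : Sinf) : Set (List Gen) :=
  {L | L ∈ Rset ζ ∧ (∀ x ∈ p, 0 ≤ x) ∧
    ∀ (i : ℕ) (q r : Gen), L[i]? = some q → L[i + 1]? = some r →
      (∀ t : ℕ, (p.take t).sum ≠ (i : ℤ) + 1) → q.val.1 < r.val.1}

/-- `E_p(ζ)`: as `H_p(ζ)` but with the `α`'s strictly decreasing in each block. -/
def Eset (p : List ℤ) (ζ : Sinf) : Set (List Gen) :=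
  {L | L ∈ Rset ζ ∧ (∀ x ∈ p, 0 ≤ x) ∧
    ∀ (i : ℕ) (q r : Gen), L[i]? = some q → L[i + 1]? = some r →
      (∀ t : ℕ, (p.take t).sum ≠ (i : ℤ) + 1) → r.val.1 < q.val.1}

/-- `E'_p(ζ)`: as `H_p(ζ)` but with the `β`'s strictly decreasing in each block. -/
def E'set (p : List ℤ) (ζ : Sinf) : Set (List Gen) :=
  {L | L ∈ Rset ζ ∧ (∀ x ∈ p, 0 ≤ x) ∧
    ∀ (i : ℕ) (q r : Gen), L[i]? = some q → L[i + 1]? = some r →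
      (∀ t : ℕ, (p.take t).sum ≠ (i : ℤ) + 1) → r.val.2 < q.val.2}

/-- The integer sequence `λ_σ = (λ_{σ(i)} + i − σ(i))ᵢ` (here `0`-indexed). -/
def lamSeq (r : ℕ) (lam : Fin r → ℕ) (σ : Equiv.Perm (Fin r)) : List ℤ :=
  (List.finRange r).map (fun i => (lam (σ i) : ℤ) + (i : ℤ) - ((σ i : ℕ) : ℤ))

/-- `c_λ^ζ := Σ_{σ ∈ S_r} ε(σ)·|H_{λ_σ}(ζ)|`. -/
def cCoef (r : ℕ) (lam : Fin r → ℕ) (ζ : Sinf) : ℤ :=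
  ∑ σ : Equiv.Perm (Fin r),
    ((Equiv.Perm.sign σ : ℤˣ) : ℤ) * ((Hset (lamSeq r lam σ) ζ).ncard : ℤ)

/-- The free monoid-with-zero on the generators `u_{αβ}`. -/
abbrev FM : Type := WithZero (FreeMonoid Gen)

/-- The generator `u_{αβ}` as an element of `FM`. -/
def g (α β : ℕ+) (h : α < β) : FM :=
  ((FreeMonoid.of (⟨(α, β), h⟩ : Gen) : FreeMonoid Gen) : FM)

/-- The defining relations (1)–(5) of the monoid `M`. -/
inductive MRel : FM → FM → Prop
  | r1 (α β γ δ : ℕ+) (h1 : α < β) (h2 : β < γ) (h3 : γ < δ) :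
      MRel (g β γ h2 * g γ δ h3 * g α γ (h1.trans h2))
           (g β δ (h2.trans h3) * g α β h1 * g β γ h2)
  | r2 (α β γ δ : ℕ+) (h1 : α < β) (h2 : β < γ) (h3 : γ < δ) :
      MRel (g α γ (h1.trans h2) * g γ δ h3 * g β γ h2)
           (g β γ h2 * g α β h1 * g β δ (h2.trans h3))
  | r3a (α β γ δ : ℕ+) (h1 : α < β) (h2 : γ < δ) (h : β < γ) :
      MRel (g α β h1 * g γ δ h2) (g γ δ h2 * g α β h1)
  | r3b (α β γ δ : ℕ+) (h1 : α < β) (h2 : γ < δ) (h3 : α < γ) (h4 : δ < β) :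
      MRel (g α β h1 * g γ δ h2) (g γ δ h2 * g α β h1)
  | r4a (α β γ δ : ℕ+) (h1 : α ≤ β) (h2 : β < γ) (h3 : γ ≤ δ) :
      MRel (g α γ (h1.trans_lt h2) * g β δ (h2.trans_le h3)) 0
  | r4b (α β γ δ : ℕ+) (h1 : α ≤ β) (h2 : β < γ) (h3 : γ ≤ δ) :
      MRel (g β δ (h2.trans_le h3) * g α γ (h1.trans_lt h2)) 0
  | r5a (α β γ : ℕ+) (h1 : α < β) (h2 : β < γ) :
      MRel (g β γ h2 * g α β h1 * g β γ h2) 0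
  | r5b (α β γ : ℕ+) (h1 : α < β) (h2 : β < γ) :
      MRel (g α β h1 * g β γ h2 * g α β h1) 0

/-- The congruence generated by the relations (1)–(5); the monoid `M` is its
quotient `MCon.Quotient`. -/
def MCon : Con FM := conGen MRel

/-- The word `u_{αₙβₙ}⋯u_{α₁β₁} ∈ FM` for `L = [(α₁,β₁),…,(αₙ,βₙ)]`. -/
def wordFM (L : List Gen) : FM :=
  ((FreeMonoid.ofList L.reverse : FreeMonoid Gen) : FM)

/-- The generator `u_{αβ}` in the free monoid (no zero). -/
def g3 (α β : ℕ+) (h : α < β) : FreeMonoid Gen := FreeMonoid.of ⟨(α, β), h⟩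

/-- The relations (1)–(3) only, on the free monoid (no zero). -/
inductive MRel3 : FreeMonoid Gen → FreeMonoid Gen → Prop
  | r1 (α β γ δ : ℕ+) (h1 : α < β) (h2 : β < γ) (h3 : γ < δ) :
      MRel3 (g3 β γ h2 * g3 γ δ h3 * g3 α γ (h1.trans h2))
            (g3 β δ (h2.trans h3) * g3 α β h1 * g3 β γ h2)
  | r2 (α β γ δ : ℕ+) (h1 : α < β) (h2 : β < γ) (h3 : γ < δ) :
      MRel3 (g3 α γ (h1.trans h2) * g3 γ δ h3 * g3 β γ h2)
            (g3 β γ h2 * g3 α β h1 * g3 β δ (h2.trans h3))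
  | r3a (α β γ δ : ℕ+) (h1 : α < β) (h2 : γ < δ) (h : β < γ) :
      MRel3 (g3 α β h1 * g3 γ δ h2) (g3 γ δ h2 * g3 α β h1)
  | r3b (α β γ δ : ℕ+) (h1 : α < β) (h2 : γ < δ) (h3 : α < γ) (h4 : δ < β) :
      MRel3 (g3 α β h1 * g3 γ δ h2) (g3 γ δ h2 * g3 α β h1)

/-- The word (with letters `(αᵢ,βᵢ)`) encoding a maximal chain of `[u,w]ₖ`:
there are permutations `u = u₀ <ₖ u₁ <ₖ ⋯ <ₖ uₙ = w` (each step a `k`-Bruhat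
cover) with `uᵢ₊₁ = (αᵢ₊₁ βᵢ₊₁)·uᵢ`. -/
def IsChainWord (k : ℕ+) (u w : Sinf) (L : List Gen) : Prop :=
  ∃ c : ℕ → Sinf, c 0 = u ∧ c L.length = w ∧
    ∀ (i : ℕ) (q : Gen), L[i]? = some q →
      kCover k (c i) (c (i + 1)) ∧ c (i + 1) = Equiv.swap q.val.1 q.val.2 * c i

/-- For an order-preserving `f`, the induced map on generators
`(α,β) ↦ (f α, f β)`. -/
def genMap (f : ℕ+ → ℕ+) (p : Gen) : Gen :=
  if h : f p.val.1 < f p.val.2 then ⟨(f p.val.1, f p.val.2), h⟩ else p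

/-- For an order-reversing `f`, the induced map on generators
`(α,β) ↦ (f β, f α)`. -/
def vmapGen (f : ℕ+ → ℕ+) (p : Gen) : Gen :=
  if h : f p.val.2 < f p.val.1 then ⟨(f p.val.2, f p.val.1), h⟩ else p

/-- The map `φ_a : {1,2,…} → {1,2,…}`, `i ↦ i` for `i < a` and `i ↦ i+1` for `i ≥ a`. -/
def phiF (a : ℕ+) (i : ℕ+) : ℕ+ := if i < a then i else i + 1

end
noncomputable section
namespace EllUProof
open scoped Classical
open Set

def invSet (w : Sinf) : Set (ℕ+ × ℕ+) := {p | p.1 < p.2 ∧ w p.2 < w p.1}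

lemma len_eq (w : Sinf) : len w = (invSet w).ncard := rfl

lemma apply_ne {w : Sinf} {i : ℕ+} (h : w i ≠ i) : w (w i) ≠ w i := by
  intro h'; exact h (w.injective h')

lemma invSet_subset (w : Sinf) (N : ℕ+) (hN : ∀ i, w i ≠ i → i ≤ N) :
    invSet w ⊆ Set.Iic N ×ˢ Set.Iic N := by
  rintro ⟨i, j⟩ ⟨hij, hw⟩
  have hjN : j ≤ N := by
    by_contra hj
    push_neg at hj
    have hwj : w j = j := by
      by_contra h; exact absurd (hN j h) (not_le.2 hj)
    have hwi : w i ≠ i := by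
      intro h; rw [h, hwj] at hw; exact absurd hij (not_lt.2 hw.le)
    have h1 : i ≤ N := hN i hwi
    have h2 : w i ≤ N := hN _ (apply_ne hwi)
    rw [hwj] at hw
    exact absurd (hw.trans_le h2) (not_lt.2 hj.le)
  exact ⟨(hij.le.trans hjN), hjN⟩

lemma invSet_finite {w : Sinf} (hw : FinSupp w) : (invSet w).Finite := by
  obtain ⟨N, hN⟩ : ∃ N : ℕ+, ∀ i, w i ≠ i → i ≤ N := by
    rcases Set.Finite.bddAbove hw with ⟨N, hN⟩
    exact ⟨N, fun i hi => hN hi⟩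
  exact Set.Finite.subset ((Set.finite_Iic N).prod (Set.finite_Iic N)) (invSet_subset w N hN)

lemma finSupp_mul {f g : Sinf} (hf : FinSupp f) (hg : FinSupp g) : FinSupp (f * g) := by
  apply Set.Finite.subset (hf.union hg)
  intro i hi
  simp only [Set.mem_setOf_eq, Set.mem_union] at hi ⊢
  by_contra h
  push_neg at h
  obtain ⟨h1, h2⟩ := h
  exact hi (by simp [Equiv.Perm.mul_apply, h2, h1])

lemma finSupp_inv {f : Sinf} (hf : FinSupp f) : FinSupp f⁻¹ := by
  apply Set.Finite.subset hf
  intro i hi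
  simp only [Set.mem_setOf_eq] at hi ⊢
  intro h
  apply hi
  conv_lhs => rw [← h]
  simp

lemma finSupp_swap (a b : ℕ+) : FinSupp (Equiv.swap a b) := by
  apply Set.Finite.subset (Set.toFinite ({a, b} : Set ℕ+))
  intro i hi
  simp only [Set.mem_setOf_eq] at hi
  by_contra h
  simp only [Set.mem_insert_iff, Set.mem_singleton_iff] at h
  push_neg at h
  exact hi (Equiv.swap_apply_of_ne_of_ne h.1 h.2)

lemma finSupp_one : FinSupp (1 : Sinf) := by
  apply Set.Finite.subset (Set.finite_empty)
  intro i hi; simp at hi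

end EllUProof
end
noncomputable section
namespace EllUProof
open Set

/-- the "sorted swap" map on pairs -/
def psi (c d : ℕ+) (p : ℕ+ × ℕ+) : ℕ+ × ℕ+ :=
  if Equiv.swap c d p.1 < Equiv.swap c d p.2 then (Equiv.swap c d p.1, Equiv.swap c d p.2)
  else (Equiv.swap c d p.2, Equiv.swap c d p.1)

lemma psi_psi {c d : ℕ+} {p : ℕ+ × ℕ+} (hp : p.1 < p.2) : psi c d (psi c d p) = p := by
  have hne : Equiv.swap c d p.1 ≠ Equiv.swap c d p.2 :=
    fun h => absurd ((Equiv.swap c d).injective h) hp.ne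
  rcases lt_or_gt_of_ne hne with h | h
  · have h' : psi c d p = (Equiv.swap c d p.1, Equiv.swap c d p.2) := by rw [psi, if_pos h]
    rw [h', psi]
    simp only [Equiv.swap_apply_self]
    rw [if_pos hp]
  · have h' : psi c d p = (Equiv.swap c d p.2, Equiv.swap c d p.1) := by
      rw [psi, if_neg (not_lt.2 h.le)]
    rw [h', psi]
    simp only [Equiv.swap_apply_self]
    rw [if_neg (not_lt.2 hp.le)]

lemma psi_fst_lt_snd {c d : ℕ+} {p : ℕ+ × ℕ+} (hp : p.1 < p.2) :
    (psi c d p).1 < (psi c d p).2 := by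
  have hne : Equiv.swap c d p.1 ≠ Equiv.swap c d p.2 :=
    fun h => absurd ((Equiv.swap c d).injective h) hp.ne
  rcases lt_or_gt_of_ne hne with h | h
  · rw [psi, if_pos h]; exact h
  · rw [psi, if_neg (not_lt.2 h.le)]; exact h

lemma psi_injOn (c d : ℕ+) : Set.InjOn (psi c d) {p : ℕ+ × ℕ+ | p.1 < p.2} := by
  intro p hp q hq h
  have := psi_psi (c := c) (d := d) hp
  rw [h, psi_psi hq] at this
  exact this.symm

lemma psi_mem_F {c d : ℕ+} {p : ℕ+ × ℕ+} (hp : p ∈ invSet (Equiv.swap c d)) :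
    psi c d p ∈ invSet (Equiv.swap c d) := by
  obtain ⟨h1, h2⟩ := hp
  rw [psi, if_neg (not_lt.2 h2.le)]
  refine ⟨h2, ?_⟩
  simp only [Equiv.swap_apply_self]
  exact h1

lemma psi_not_mem_F {c d : ℕ+} {p : ℕ+ × ℕ+} (h1 : p.1 < p.2)
    (hp : p ∉ invSet (Equiv.swap c d)) : psi c d p ∉ invSet (Equiv.swap c d) := by
  intro hmem
  have := psi_mem_F hmem
  rw [psi_psi h1] at this
  exact hp this

lemma key_mem_F {w : Sinf} {c d : ℕ+} {p : ℕ+ × ℕ+} (hp : p ∈ invSet (Equiv.swap c d)) :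
    p ∈ invSet (w * Equiv.swap c d) ↔ psi c d p ∉ invSet w := by
  obtain ⟨h1, h2⟩ := hp
  have hpsi : psi c d p = (Equiv.swap c d p.2, Equiv.swap c d p.1) := by
    rw [psi, if_neg (not_lt.2 h2.le)]
  have hne : w (Equiv.swap c d p.1) ≠ w (Equiv.swap c d p.2) := by
    intro h
    exact absurd ((Equiv.swap c d).injective (w.injective h)) h1.ne
  constructor
  · rintro ⟨-, hA⟩ ⟨-, hB⟩
    rw [hpsi] at hB
    simp only [Equiv.Perm.mul_apply] at hA
    exact absurd hA (not_lt.2 hB.le)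
  · intro hB
    refine ⟨h1, ?_⟩
    simp only [Equiv.Perm.mul_apply]
    rcases lt_or_gt_of_ne hne with h | h
    · exfalso; exact hB ⟨(by rw [hpsi]; exact h2), by rw [hpsi]; exact h⟩
    · exact h

lemma key_not_mem_F {w : Sinf} {c d : ℕ+} {p : ℕ+ × ℕ+} (h1 : p.1 < p.2)
    (hp : p ∉ invSet (Equiv.swap c d)) :
    p ∈ invSet (w * Equiv.swap c d) ↔ psi c d p ∈ invSet w := by
  have h2 : Equiv.swap c d p.1 < Equiv.swap c d p.2 := by
    have hne : Equiv.swap c d p.1 ≠ Equiv.swap c d p.2 :=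
      fun h => absurd ((Equiv.swap c d).injective h) h1.ne
    rcases lt_or_gt_of_ne hne with h | h
    · exact h
    · exact absurd ⟨h1, h⟩ hp
  have hpsi : psi c d p = (Equiv.swap c d p.1, Equiv.swap c d p.2) := by
    rw [psi, if_pos h2]
  constructor
  · rintro ⟨-, hA⟩
    simp only [Equiv.Perm.mul_apply] at hA
    exact ⟨(by rw [hpsi]; exact h2), by rw [hpsi]; exact hA⟩
  · rintro ⟨-, hB⟩
    rw [hpsi] at hB
    exact ⟨h1, by simp only [Equiv.Perm.mul_apply]; exact hB⟩

lemma star_count {w : Sinf} (hw : FinSupp w) (c d : ℕ+) :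
    (invSet (w * Equiv.swap c d)).ncard
      + 2 * ((invSet w) ∩ (invSet (Equiv.swap c d))).ncard
    = (invSet w).ncard + (invSet (Equiv.swap c d)).ncard := by
  set T := Equiv.swap c d with hT
  set A := invSet (w * T) with hA
  set B := invSet w with hB
  set F := invSet T with hF
  have hAfin : A.Finite := invSet_finite (finSupp_mul hw (finSupp_swap c d))
  have hBfin : B.Finite := invSet_finite hw
  have hFfin : F.Finite := invSet_finite (finSupp_swap c d)
  have hBP : ∀ p ∈ B, p.1 < p.2 := fun p hp => hp.1
  have hFP : ∀ p ∈ F, p.1 < p.2 := fun p hp => hp.1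
  have hAP : ∀ p ∈ A, p.1 < p.2 := fun p hp => hp.1
  have h1 : A \ F = psi c d '' (B \ F) := by
    ext p
    constructor
    · rintro ⟨hpA, hpF⟩
      have hp1 := hAP p hpA
      refine ⟨psi c d p, ⟨?_, ?_⟩, psi_psi hp1⟩
      · exact (key_not_mem_F hp1 hpF).1 hpA
      · exact psi_not_mem_F hp1 hpF
    · rintro ⟨q, ⟨hqB, hqF⟩, rfl⟩
      have hq1 := hBP q hqB
      have hq2 : psi c d q ∉ F := psi_not_mem_F hq1 hqF
      refine ⟨?_, hq2⟩
      rw [key_not_mem_F (psi_fst_lt_snd hq1) hq2, psi_psi hq1]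
      exact hqB
  have h2 : A ∩ F = F \ (psi c d '' (B ∩ F)) := by
    ext p
    constructor
    · rintro ⟨hpA, hpF⟩
      refine ⟨hpF, ?_⟩
      rintro ⟨q, ⟨hqB, hqF⟩, rfl⟩
      have hq1 := hBP q hqB
      rw [key_mem_F (psi_mem_F hqF)] at hpA
      rw [psi_psi hq1] at hpA
      exact hpA hqB
    · rintro ⟨hpF, hpIm⟩
      refine ⟨?_, hpF⟩
      rw [key_mem_F hpF]
      intro hB'
      exact hpIm ⟨psi c d p, ⟨hB', psi_mem_F hpF⟩, psi_psi (hFP p hpF)⟩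
  have hsubP : B \ F ⊆ {p : ℕ+ × ℕ+ | p.1 < p.2} := fun p hp => hBP p hp.1
  have hsubP2 : B ∩ F ⊆ {p : ℕ+ × ℕ+ | p.1 < p.2} := fun p hp => hBP p hp.1
  have e1 : (A \ F).ncard = (B \ F).ncard := by
    rw [h1, Set.ncard_image_of_injOn ((psi_injOn c d).mono hsubP)]
  have himsub : psi c d '' (B ∩ F) ⊆ F := by
    rintro q ⟨p, ⟨-, hpF⟩, rfl⟩; exact psi_mem_F hpF
  have e2 : (A ∩ F).ncard = F.ncard - (B ∩ F).ncard := by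
    rw [h2, Set.ncard_diff himsub ((hBfin.inter_of_left F).image _),
      Set.ncard_image_of_injOn ((psi_injOn c d).mono hsubP2)]
  have e3 : A.ncard = (A \ F).ncard + (A ∩ F).ncard := by
    rw [← Set.ncard_union_eq disjoint_sdiff_inter hAfin.diff (hAfin.inter_of_left F),
      Set.diff_union_inter]
  have e4 : B.ncard = (B \ F).ncard + (B ∩ F).ncard := by
    rw [← Set.ncard_union_eq disjoint_sdiff_inter hBfin.diff (hBfin.inter_of_left F),
      Set.diff_union_inter]
  have e5 : (B ∩ F).ncard ≤ F.ncard :=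
    Set.ncard_le_ncard Set.inter_subset_right hFfin
  omega

end EllUProof
end
noncomputable section
namespace EllUProof
open Set

lemma mem_F_iff {c d : ℕ+} (hcd : c < d) (p : ℕ+ × ℕ+) :
    p ∈ invSet (Equiv.swap c d) ↔
      (p = (c, d) ∨ (p.1 = c ∧ c < p.2 ∧ p.2 < d) ∨ (p.2 = d ∧ c < p.1 ∧ p.1 < d)) := by
  constructor
  · rintro ⟨h1, h2⟩
    by_cases hp1c : p.1 = c
    · by_cases hp2d : p.2 = d
      · left; exact Prod.ext hp1c hp2d
      · have hp2c : p.2 ≠ c := (hp1c ▸ h1).ne'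
        rw [hp1c, Equiv.swap_apply_left, Equiv.swap_apply_of_ne_of_ne hp2c hp2d] at h2
        right; left; exact ⟨hp1c, hp1c ▸ h1, h2⟩
    · by_cases hp1d : p.1 = d
      · exfalso
        have hp2 : d < p.2 := hp1d ▸ h1
        rw [hp1d, Equiv.swap_apply_right,
          Equiv.swap_apply_of_ne_of_ne (hcd.trans hp2).ne' hp2.ne'] at h2
        exact absurd (h2.trans (hcd.trans hp2)) (lt_irrefl _)
      · rw [Equiv.swap_apply_of_ne_of_ne hp1c hp1d] at h2
        by_cases hp2c : p.2 = c
        · exfalso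
          rw [hp2c, Equiv.swap_apply_left] at h2
          have : p.1 < c := hp2c ▸ h1
          exact absurd ((hcd.trans h2).trans this) (lt_irrefl _)
        · by_cases hp2d : p.2 = d
          · rw [hp2d, Equiv.swap_apply_right] at h2
            right; right; exact ⟨hp2d, h2, hp2d ▸ h1⟩
          · exfalso
            rw [Equiv.swap_apply_of_ne_of_ne hp2c hp2d] at h2
            exact absurd h1 (not_lt.2 h2.le)
  · rintro (rfl | ⟨h1, h2, h3⟩ | ⟨h1, h2, h3⟩)
    · exact ⟨hcd, by simp [Equiv.swap_apply_left, Equiv.swap_apply_right, hcd]⟩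
    · refine ⟨h1 ▸ h2, ?_⟩
      rw [h1, Equiv.swap_apply_left, Equiv.swap_apply_of_ne_of_ne h2.ne' h3.ne]
      exact h3
    · refine ⟨h1 ▸ h3, ?_⟩
      rw [h1, Equiv.swap_apply_right, Equiv.swap_apply_of_ne_of_ne h2.ne' h3.ne]
      exact h2

lemma ncard_F {c d : ℕ+} (hcd : c < d) :
    (invSet (Equiv.swap c d)).ncard = 2 * (Set.Ioo c d).ncard + 1 := by
  have hset : invSet (Equiv.swap c d) =
      ((fun e => (c, e)) '' Set.Ioo c d) ∪ (((fun e => (e, d)) '' Set.Ioo c d) ∪ {(c, d)}) := by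
    ext p
    rw [mem_F_iff hcd]
    simp only [Set.mem_union, Set.mem_image, Set.mem_Ioo, Set.mem_singleton_iff]
    constructor
    · rintro (h | ⟨h1, h2, h3⟩ | ⟨h1, h2, h3⟩)
      · right; right; exact h
      · left; exact ⟨p.2, ⟨h2, h3⟩, by rw [← h1]⟩
      · right; left; exact ⟨p.1, ⟨h2, h3⟩, by rw [← h1]⟩
    · rintro (⟨e, ⟨h2, h3⟩, rfl⟩ | ⟨e, ⟨h2, h3⟩, rfl⟩ | h)
      · right; left; exact ⟨rfl, h2, h3⟩
      · right; right; exact ⟨rfl, h2, h3⟩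
      · left; exact h
  have hinj1 : Function.Injective (fun e : ℕ+ => (c, e)) := fun a b h => (Prod.ext_iff.1 h).2
  have hinj2 : Function.Injective (fun e : ℕ+ => (e, d)) := fun a b h => (Prod.ext_iff.1 h).1
  have hIoo : (Set.Ioo c d).Finite := Set.finite_Ioo c d
  have hd1 : Disjoint ((fun e => (c, e)) '' Set.Ioo c d)
      (((fun e => (e, d)) '' Set.Ioo c d) ∪ {(c, d)}) := by
    rw [Set.disjoint_left]
    rintro p ⟨e, ⟨he1, he2⟩, rfl⟩ (⟨e', ⟨he1', he2'⟩, he⟩ | h)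
    · rw [Prod.mk.injEq] at he; exact absurd (he.1 ▸ he1') (lt_irrefl c)
    · rw [Set.mem_singleton_iff, Prod.mk.injEq] at h; exact absurd (h.2 ▸ he2) (lt_irrefl d)
  have hd2 : Disjoint ((fun e => (e, d)) '' Set.Ioo c d) ({(c, d)} : Set (ℕ+ × ℕ+)) := by
    rw [Set.disjoint_left]
    rintro p ⟨e, ⟨he1, he2⟩, rfl⟩ h
    rw [Set.mem_singleton_iff, Prod.mk.injEq] at h
    exact absurd (h.1 ▸ he1) (lt_irrefl c)
  rw [hset, Set.ncard_union_eq hd1 (hIoo.image _) (((hIoo.image _)).union (Set.finite_singleton _)),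
    Set.ncard_union_eq hd2 (hIoo.image _) (Set.finite_singleton _),
    Set.ncard_image_of_injective _ hinj1, Set.ncard_image_of_injective _ hinj2,
    Set.ncard_singleton]
  ring

lemma w_ne {w : Sinf} {x y : ℕ+} (h : x ≠ y) : w x ≠ w y := fun h' => h (w.injective h')

lemma cover_wlt {w : Sinf} (hw : FinSupp w) {c d : ℕ+} (hcd : c < d)
    (hlen : len (w * Equiv.swap c d) = len w + 1) : w c < w d := by
  have hstar := star_count hw c d
  rw [len_eq, len_eq] at hlen
  rw [hlen, ncard_F hcd] at hstar
  -- so (B∩F).ncard = (Ioo c d).ncard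
  by_contra hlt
  have hdc : w d < w c := by
    rcases lt_or_gt_of_ne (w_ne hcd.ne : w c ≠ w d) with h | h
    · exact absurd h hlt
    · exact h
  set E1 : Set ℕ+ := {e ∈ Set.Ioo c d | w e < w c} with hE1
  set E2 : Set ℕ+ := {e ∈ Set.Ioo c d | ¬ w e < w c} with hE2
  have hIoo : (Set.Ioo c d).Finite := Set.finite_Ioo c d
  have hE12 : E1 ∪ E2 = Set.Ioo c d := by
    ext e; simp only [hE1, hE2, Set.mem_union, Set.mem_sep_iff]; tauto
  have hE1fin : E1.Finite := hIoo.subset (fun e he => he.1)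
  have hE2fin : E2.Finite := hIoo.subset (fun e he => he.1)
  have hdisj : Disjoint E1 E2 := by
    rw [Set.disjoint_left]; rintro e ⟨-, h1⟩ ⟨-, h2⟩; exact h2 h1
  have hcards : E1.ncard + E2.ncard = (Set.Ioo c d).ncard := by
    rw [← Set.ncard_union_eq hdisj hE1fin hE2fin, hE12]
  set S0 : Set (ℕ+ × ℕ+) :=
    insert (c, d) (((fun e => (c, e)) '' E1) ∪ ((fun e => (e, d)) '' E2)) with hS0
  have hsub : S0 ⊆ invSet w ∩ invSet (Equiv.swap c d) := by
    rintro p (rfl | (⟨e, ⟨⟨hec, hed⟩, hwe⟩, rfl⟩ | ⟨e, ⟨⟨hec, hed⟩, hwe⟩, rfl⟩))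
    · exact ⟨⟨hcd, hdc⟩, (mem_F_iff hcd _).2 (Or.inl rfl)⟩
    · exact ⟨⟨hec, hwe⟩, (mem_F_iff hcd _).2 (Or.inr (Or.inl ⟨rfl, hec, hed⟩))⟩
    · have : w c < w e := lt_of_le_of_ne (not_lt.1 hwe) (w_ne hec.ne)
      exact ⟨⟨hed, hdc.trans this⟩, (mem_F_iff hcd _).2 (Or.inr (Or.inr ⟨rfl, hec, hed⟩))⟩
  have hinj1 : Function.Injective (fun e : ℕ+ => (c, e)) := fun a b h => (Prod.ext_iff.1 h).2
  have hinj2 : Function.Injective (fun e : ℕ+ => (e, d)) := fun a b h => (Prod.ext_iff.1 h).1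
  have hd2 : Disjoint ((fun e => (c, e)) '' E1) ((fun e => (e, d)) '' E2) := by
    rw [Set.disjoint_left]
    rintro p ⟨e, ⟨⟨he1, he2⟩, -⟩, rfl⟩ ⟨e', ⟨⟨he1', he2'⟩, -⟩, he⟩
    rw [Prod.mk.injEq] at he
    exact absurd (he.1 ▸ he1') (lt_irrefl c)
  have hnotmem : (c, d) ∉ ((fun e => (c, e)) '' E1) ∪ ((fun e => (e, d)) '' E2) := by
    rintro (⟨e, ⟨⟨he1, he2⟩, -⟩, he⟩ | ⟨e, ⟨⟨he1, he2⟩, -⟩, he⟩)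
    · rw [Prod.mk.injEq] at he; exact absurd (he.2 ▸ he2) (lt_irrefl d)
    · rw [Prod.mk.injEq] at he; exact absurd (he.1 ▸ he1) (lt_irrefl c)
  have hS0card : S0.ncard = (Set.Ioo c d).ncard + 1 := by
    rw [hS0, Set.ncard_insert_of_notMem hnotmem
        (((hE1fin.image _)).union (hE2fin.image _)),
      Set.ncard_union_eq hd2 (hE1fin.image _) (hE2fin.image _),
      Set.ncard_image_of_injective _ hinj1, Set.ncard_image_of_injective _ hinj2, hcards]
  have hle : S0.ncard ≤ (invSet w ∩ invSet (Equiv.swap c d)).ncard :=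
    Set.ncard_le_ncard hsub ((invSet_finite hw).inter_of_left _)
  omega

end EllUProof
end
noncomputable section
namespace EllUProof
open Set

lemma mem_invSet {w : Sinf} {p : ℕ+ × ℕ+} :
    p ∈ invSet w ↔ p.1 < p.2 ∧ w p.2 < w p.1 := Iff.rfl

lemma injOn_f {w : Sinf} {c d : ℕ+} (hcd : c < d) (hwcd : w c < w d) :
    Set.InjOn (fun p : ℕ+ × ℕ+ => if p.1 = c then p.2 else p.1)
      (invSet w ∩ invSet (Equiv.swap c d)) := by
  rintro p ⟨hpB, hpF⟩ q ⟨hqB, hqF⟩ hfpq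
  simp only at hfpq
  rcases (mem_F_iff hcd p).1 hpF with rfl | ⟨hp1, hp2, hp3⟩ | ⟨hp1, hp2, hp3⟩
  · exact absurd hpB.2 (not_lt.2 hwcd.le)
  all_goals rcases (mem_F_iff hcd q).1 hqF with rfl | ⟨hq1, hq2, hq3⟩ | ⟨hq1, hq2, hq3⟩
  · exact absurd hqB.2 (not_lt.2 hwcd.le)
  · rw [if_pos hp1, if_pos hq1] at hfpq
    exact Prod.ext (hp1.trans hq1.symm) hfpq
  · rw [if_pos hp1, if_neg hq2.ne'] at hfpq
    exfalso
    have h1 : w p.2 < w c := hp1 ▸ hpB.2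
    have h2 : w d < w q.1 := hq1 ▸ hqB.2
    rw [hfpq] at h1
    exact absurd ((h2.trans h1).trans hwcd) (lt_irrefl _)
  · exact absurd hqB.2 (not_lt.2 hwcd.le)
  · rw [if_neg hp2.ne', if_pos hq1] at hfpq
    exfalso
    have h1 : w q.2 < w c := hq1 ▸ hqB.2
    have h2 : w d < w p.1 := hp1 ▸ hpB.2
    rw [← hfpq] at h1
    exact absurd ((h2.trans h1).trans hwcd) (lt_irrefl _)
  · rw [if_neg hp2.ne', if_neg hq2.ne'] at hfpq
    exact Prod.ext hfpq (hp1.trans hq1.symm)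

lemma cover_no_mid {w : Sinf} (hw : FinSupp w) {c d : ℕ+} (hcd : c < d)
    (hlen : len (w * Equiv.swap c d) = len w + 1) :
    ∀ e, c < e → e < d → w e < w c ∨ w d < w e := by
  have hwcd := cover_wlt hw hcd hlen
  have hstar := star_count hw c d
  rw [len_eq, len_eq] at hlen
  rw [hlen, ncard_F hcd] at hstar
  intro e0 he0c he0d
  by_contra hmid
  push_neg at hmid
  obtain ⟨h1, h2⟩ := hmid
  have hce : w c < w e0 := lt_of_le_of_ne h1 (w_ne he0c.ne)
  have hed : w e0 < w d := lt_of_le_of_ne h2 (w_ne he0d.ne)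
  set f : ℕ+ × ℕ+ → ℕ+ := fun p => if p.1 = c then p.2 else p.1 with hf
  set M := invSet w ∩ invSet (Equiv.swap c d) with hM
  have hMfin : M.Finite := (invSet_finite hw).inter_of_left _
  have himg : ∀ p ∈ M, f p ∈ Set.Ioo c d \ {e0} := by
    rintro p ⟨hpB, hpF⟩
    rcases (mem_F_iff hcd p).1 hpF with rfl | ⟨hp1, hp2, hp3⟩ | ⟨hp1, hp2, hp3⟩
    · exact absurd hpB.2 (not_lt.2 hwcd.le)
    · have hfp : f p = p.2 := if_pos hp1
      rw [hfp]
      refine ⟨⟨hp2, hp3⟩, ?_⟩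
      intro hp
      rw [Set.mem_singleton_iff] at hp
      have : w p.2 < w c := hp1 ▸ hpB.2
      rw [hp] at this
      exact absurd (this.trans hce) (lt_irrefl _)
    · have hfp : f p = p.1 := if_neg hp2.ne'
      rw [hfp]
      refine ⟨⟨hp2, hp3⟩, ?_⟩
      intro hp
      rw [Set.mem_singleton_iff] at hp
      have : w d < w p.1 := hp1 ▸ hpB.2
      rw [hp] at this
      exact absurd (hed.trans this) (lt_irrefl _)
  have hIoo : (Set.Ioo c d).Finite := Set.finite_Ioo c d
  have hcard1 : M.ncard = (f '' M).ncard :=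
    (Set.ncard_image_of_injOn (injOn_f hcd hwcd)).symm
  have hcard2 : (f '' M).ncard ≤ (Set.Ioo c d \ {e0}).ncard := by
    apply Set.ncard_le_ncard _ hIoo.diff
    rintro x ⟨p, hp, rfl⟩
    exact himg p hp
  have hcard3 : (Set.Ioo c d \ {e0}).ncard = (Set.Ioo c d).ncard - 1 :=
    Set.ncard_diff_singleton_of_mem ⟨he0c, he0d⟩
  have hpos : 0 < (Set.Ioo c d).ncard := by
    rw [Set.ncard_pos hIoo]
    exact ⟨e0, he0c, he0d⟩
  omega

lemma cover_of {w : Sinf} (hw : FinSupp w) {c d : ℕ+} (hcd : c < d)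
    (hwcd : w c < w d) (hmid : ∀ e, c < e → e < d → w e < w c ∨ w d < w e) :
    len (w * Equiv.swap c d) = len w + 1 := by
  have hstar := star_count hw c d
  rw [ncard_F hcd] at hstar
  rw [len_eq, len_eq]
  set f : ℕ+ × ℕ+ → ℕ+ := fun p => if p.1 = c then p.2 else p.1 with hf
  set M := invSet w ∩ invSet (Equiv.swap c d) with hM
  have himg : f '' M = Set.Ioo c d := by
    apply Set.Subset.antisymm
    · rintro x ⟨p, ⟨hpB, hpF⟩, rfl⟩
      rcases (mem_F_iff hcd p).1 hpF with rfl | ⟨hp1, hp2, hp3⟩ | ⟨hp1, hp2, hp3⟩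
      · exact absurd hpB.2 (not_lt.2 hwcd.le)
      · have hfp : f p = p.2 := if_pos hp1
        rw [hfp]; exact ⟨hp2, hp3⟩
      · have hfp : f p = p.1 := if_neg hp2.ne'
        rw [hfp]; exact ⟨hp2, hp3⟩
    · rintro e ⟨hec, hed⟩
      rcases hmid e hec hed with h | h
      · refine ⟨(c, e), ⟨⟨hec, h⟩, (mem_F_iff hcd _).2 (Or.inr (Or.inl ⟨rfl, hec, hed⟩))⟩, ?_⟩
        exact if_pos rfl
      · refine ⟨(e, d), ⟨⟨hed, h⟩, (mem_F_iff hcd _).2 (Or.inr (Or.inr ⟨rfl, hec, hed⟩))⟩, ?_⟩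
        exact if_neg hec.ne'
  have hcard1 : M.ncard = (Set.Ioo c d).ncard := by
    rw [← himg, Set.ncard_image_of_injOn (injOn_f hcd hwcd)]
  omega

end EllUProof
end
noncomputable section
namespace EllUProof
open Set

lemma chain_props {k : ℕ+} {u w : Sinf} (h : kBruhat k u w) (hu : FinSupp u) :
    FinSupp w ∧ len u ≤ len w ∧
    (∀ a, a ≤ k → u a ≤ w a) ∧ (∀ b, k < b → w b ≤ u b) ∧
    (∀ a b, a < b → u a < u b → w b < w a → a ≤ k ∧ k < b) := by
  induction h with
  | refl =>
    exact ⟨hu, le_refl _, fun _ _ => le_refl _, fun _ _ => le_refl _,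
      fun a b hab huab hw => absurd huab (not_lt.2 hw.le)⟩
  | @tail v w' hstep hcov ih =>
    obtain ⟨hv, hlenuv, ih3, ih4, ih5⟩ := ih
    obtain ⟨hlen, c, d, hck, hkd, rfl⟩ := hcov
    have hcd : c < d := hck.trans_lt hkd
    have hwcd : v c < v d := cover_wlt hv hcd hlen
    have hmid := cover_no_mid hv hcd hlen
    have hwc : (v * Equiv.swap c d) c = v d := by
      simp [Equiv.Perm.mul_apply, Equiv.swap_apply_left]
    have hwd : (v * Equiv.swap c d) d = v c := by
      simp [Equiv.Perm.mul_apply, Equiv.swap_apply_right]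
    have hwx : ∀ x, x ≠ c → x ≠ d → (v * Equiv.swap c d) x = v x := by
      intro x h1 h2
      simp [Equiv.Perm.mul_apply, Equiv.swap_apply_of_ne_of_ne h1 h2]
    refine ⟨finSupp_mul hv (finSupp_swap c d), by omega, ?_, ?_, ?_⟩
    · -- left positions only rise
      intro a hak
      by_cases hac : a = c
      · subst hac; rw [hwc]; exact (ih3 a hak).trans hwcd.le
      · have had : a ≠ d := fun h => absurd (h ▸ hak) (not_le.2 hkd)
        rw [hwx a hac had]; exact ih3 a hak
    · -- right positions only fall
      intro b hkb
      by_cases hbd : b = d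
      · subst hbd; rw [hwd]; exact hwcd.le.trans (ih4 b hkb)
      · have hbc : b ≠ c := fun h => absurd (h ▸ hck) (not_le.2 hkb)
        rw [hwx b hbc hbd]; exact ih4 b hkb
    · -- new inversions straddle k
      intro a b hab huab hwba
      by_cases hac : a = c
      · subst hac
        by_cases hbd : b = d
        · subst hbd; exact ⟨hck, hkd⟩
        · have hbc : b ≠ a := hab.ne'
          rw [hwc, hwx b hbc hbd] at hwba
          refine ⟨hck, ?_⟩
          by_contra hbk
          push_neg at hbk
          have hbd' : b < d := lt_of_le_of_lt hbk hkd
          rcases lt_or_gt_of_ne (w_ne (w := v) hbc : v b ≠ v a) with h1 | h1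
          · exact absurd (ih5 a b hab huab h1).2 (not_lt.2 hbk)
          · rcases hmid b hab hbd' with h2 | h2
            · exact absurd h1 (not_lt.2 h2.le)
            · exact absurd hwba (not_lt.2 h2.le)
      · by_cases had : a = d
        · subst had
          have hbc : b ≠ c := fun h => absurd (h ▸ hab) (not_lt.2 hcd.le)
          have hbd : b ≠ a := hab.ne'
          rw [hwd, hwx b hbc hbd] at hwba
          have : v b < v a := hwba.trans hwcd
          exact absurd (ih5 a b hab huab this).1 (not_le.2 hkd)
        · by_cases hbc : b = c
          · subst hbc
            have had2 : a ≠ d := fun h => absurd (h ▸ hab) (not_lt.2 hcd.le)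
            rw [hwc, hwx a hac had2] at hwba
            have : v b < v a := hwcd.trans hwba
            exact absurd (ih5 a b hab huab this).2 (not_lt.2 hck)
          · by_cases hbd : b = d
            · subst hbd
              rw [hwd, hwx a hac had] at hwba
              refine ⟨?_, hkd⟩
              by_contra hak
              push_neg at hak
              have hca : c < a := lt_of_le_of_lt hck hak
              rcases hmid a hca hab with h1 | h1
              · exact absurd hwba (not_lt.2 h1.le)
              · exact absurd (ih5 a b hab huab h1).1 (not_le.2 hak)
            · rw [hwx a hac had, hwx b hbc hbd] at hwba
              exact ih5 a b hab huab hwba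

end EllUProof
end
noncomputable section
namespace EllUProof
open Set

variable (ζ u : Sinf)

/-- inversions of ζ where u-positions are in the same order -/
def IpSet : Set (ℕ+ × ℕ+) := {q ∈ invSet ζ | u⁻¹ q.1 < u⁻¹ q.2}
/-- inversions of ζ where u-positions are in the opposite order -/
def ImSet : Set (ℕ+ × ℕ+) := {q ∈ invSet ζ | u⁻¹ q.2 < u⁻¹ q.1}

lemma len_diff_eq {ζ u : Sinf} (hζ : FinSupp ζ) (hu : FinSupp u) :
    (len (ζ * u) : ℤ) - len u = (IpSet ζ u).ncard - (ImSet ζ u).ncard := by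
  set U := invSet u with hU
  set W := invSet (ζ * u) with hW
  have hUfin : U.Finite := invSet_finite hu
  have hWfin : W.Finite := invSet_finite (finSupp_mul hζ hu)
  have key1 : W \ U = (fun q : ℕ+ × ℕ+ => (u⁻¹ q.1, u⁻¹ q.2)) '' (IpSet ζ u) := by
    ext p
    constructor
    · rintro ⟨⟨hp1, hp2⟩, hpU⟩
      have hult : u p.1 < u p.2 := by
        rcases lt_or_gt_of_ne (w_ne (w := u) hp1.ne : u p.1 ≠ u p.2) with h | h
        · exact h
        · exact absurd ⟨hp1, h⟩ hpU
      refine ⟨(u p.1, u p.2), ⟨⟨hult, ?_⟩, ?_⟩, ?_⟩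
      · simpa [Equiv.Perm.mul_apply] using hp2
      · simpa using hp1
      · simp
    · rintro ⟨q, ⟨⟨hq1, hq2⟩, hq3⟩, rfl⟩
      refine ⟨⟨hq3, ?_⟩, ?_⟩
      · simpa [Equiv.Perm.mul_apply] using hq2
      · rintro ⟨-, habs⟩
        simp only [Equiv.Perm.coe_inv, Equiv.apply_symm_apply] at habs
        exact absurd hq1 (not_lt.2 habs.le)
  have key2 : U \ W = (fun q : ℕ+ × ℕ+ => (u⁻¹ q.2, u⁻¹ q.1)) '' (ImSet ζ u) := by
    ext p
    constructor
    · rintro ⟨⟨hp1, hp2⟩, hpW⟩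
      have hzlt : ζ (u p.1) < ζ (u p.2) := by
        rcases lt_or_gt_of_ne (w_ne (w := ζ) (w_ne (w := u) hp1.ne) : ζ (u p.1) ≠ ζ (u p.2))
          with h | h
        · exact h
        · exact absurd ⟨hp1, by simpa [Equiv.Perm.mul_apply] using h⟩ hpW
      refine ⟨(u p.2, u p.1), ⟨⟨hp2, hzlt⟩, ?_⟩, ?_⟩
      · simpa using hp1
      · simp
    · rintro ⟨q, ⟨⟨hq1, hq2⟩, hq3⟩, rfl⟩
      refine ⟨⟨hq3, ?_⟩, ?_⟩
      · simpa using hq1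
      · rintro ⟨-, habs⟩
        simp only [Equiv.Perm.mul_apply, Equiv.Perm.coe_inv, Equiv.apply_symm_apply] at habs
        exact absurd hq2 (not_lt.2 habs.le)
  have hinj1 : Function.Injective (fun q : ℕ+ × ℕ+ => (u⁻¹ q.1, u⁻¹ q.2)) := by
    intro p q h
    rw [Prod.mk.injEq] at h
    exact Prod.ext (u⁻¹.injective h.1) (u⁻¹.injective h.2)
  have hinj2 : Function.Injective (fun q : ℕ+ × ℕ+ => (u⁻¹ q.2, u⁻¹ q.1)) := by
    intro p q h
    rw [Prod.mk.injEq] at h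
    exact Prod.ext (u⁻¹.injective h.2) (u⁻¹.injective h.1)
  have e1 : (W \ U).ncard = (IpSet ζ u).ncard := by
    rw [key1, Set.ncard_image_of_injective _ hinj1]
  have e2 : (U \ W).ncard = (ImSet ζ u).ncard := by
    rw [key2, Set.ncard_image_of_injective _ hinj2]
  have e3 : W.ncard = (W \ U).ncard + (W ∩ U).ncard := by
    rw [← Set.ncard_union_eq disjoint_sdiff_inter hWfin.diff (hWfin.inter_of_left U),
      Set.diff_union_inter]
  have e4 : U.ncard = (U \ W).ncard + (U ∩ W).ncard := by
    rw [← Set.ncard_union_eq disjoint_sdiff_inter hUfin.diff (hUfin.inter_of_left W),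
      Set.diff_union_inter]
  have e5 : (W ∩ U).ncard = (U ∩ W).ncard := by rw [Set.inter_comm]
  rw [len_eq, len_eq, ← hU, ← hW]
  omega

end EllUProof
end
noncomputable section
namespace EllUProof
open Set

def ASet (ζ : Sinf) : Set ℕ+ := {i | i < ζ i}
def BSet (ζ : Sinf) : Set ℕ+ := {i | ζ i < i}

variable (ζ u : Sinf) (k : ℕ+)

def ABpart : Set (ℕ+ × ℕ+) := {q ∈ invSet ζ | q.1 ∈ ASet ζ ∧ q.2 ∈ BSet ζ}
def AApart : Set (ℕ+ × ℕ+) := {q ∈ invSet ζ | q.1 ∈ ASet ζ ∧ q.2 ∈ ASet ζ}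
def BBpart : Set (ℕ+ × ℕ+) := {q ∈ invSet ζ | q.1 ∈ BSet ζ ∧ q.2 ∈ BSet ζ}
def IpfSet : Set (ℕ+ × ℕ+) :=
  {q ∈ invSet ζ | (ζ q.1 = q.1 ∧ u⁻¹ q.1 ≤ k) ∨ (ζ q.2 = q.2 ∧ k < u⁻¹ q.2)}
def ImfSet : Set (ℕ+ × ℕ+) :=
  {q ∈ invSet ζ | (ζ q.1 = q.1 ∧ k < u⁻¹ q.1) ∨ (ζ q.2 = q.2 ∧ u⁻¹ q.2 ≤ k)}

lemma not_both_fixed {ζ : Sinf} {q : ℕ+ × ℕ+} (hq : q ∈ invSet ζ)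
    (h1 : ζ q.1 = q.1) (h2 : ζ q.2 = q.2) : False := by
  have h := hq.2
  rw [h1, h2] at h
  exact absurd hq.1 (not_lt.2 h.le)

section WithHyps

variable {ζ u : Sinf} {k : ℕ+}
variable (hP4v : ∀ x : ℕ+, k < u⁻¹ x → ζ x ≤ x)
variable (hP3v : ∀ x : ℕ+, u⁻¹ x ≤ k → x ≤ ζ x)
variable (hP5v : ∀ x y : ℕ+, x < y → ζ y < ζ x → u⁻¹ x < u⁻¹ y → u⁻¹ x ≤ k ∧ k < u⁻¹ y)

section clAB
include hP4v
lemma clA : ∀ x ∈ ASet ζ, u⁻¹ x ≤ k := by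
  intro x hx
  by_contra h
  push_neg at h
  exact absurd hx (not_lt.2 (hP4v x h))
end clAB

section clB'
include hP3v
lemma clB : ∀ x ∈ BSet ζ, k < u⁻¹ x := by
  intro x hx
  by_contra h
  push_neg at h
  exact absurd hx (not_lt.2 (hP3v x h))
end clB'

include hP3v hP4v hP5v

lemma Ip_eq : IpSet ζ u = ABpart ζ ∪ IpfSet ζ u k := by
  ext q
  constructor
  · rintro ⟨⟨hq12, hqinv⟩, hpos⟩
    rcases lt_trichotomy q.1 (ζ q.1) with h1 | h1 | h1
    · rcases lt_trichotomy q.2 (ζ q.2) with h2 | h2 | h2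
      · exact absurd (hP5v q.1 q.2 hq12 hqinv hpos).2 (not_lt.2 (clA hP4v q.2 h2))
      · exact Or.inr ⟨⟨hq12, hqinv⟩, Or.inr ⟨h2.symm, (hP5v q.1 q.2 hq12 hqinv hpos).2⟩⟩
      · exact Or.inl ⟨⟨hq12, hqinv⟩, h1, h2⟩
    · exact Or.inr ⟨⟨hq12, hqinv⟩, Or.inl ⟨h1.symm, (hP5v q.1 q.2 hq12 hqinv hpos).1⟩⟩
    · exact absurd (hP5v q.1 q.2 hq12 hqinv hpos).1 (not_le.2 (clB hP3v q.1 h1))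
  · rintro (⟨⟨hq12, hqinv⟩, hA, hB⟩ | ⟨⟨hq12, hqinv⟩, (⟨hfix, hk1⟩ | ⟨hfix, hk2⟩)⟩)
    · exact ⟨⟨hq12, hqinv⟩, lt_of_le_of_lt (clA hP4v q.1 hA) (clB hP3v q.2 hB)⟩
    · have hB : q.2 ∈ BSet ζ := by
        have : ζ q.2 < q.1 := hfix ▸ hqinv
        exact this.trans hq12
      exact ⟨⟨hq12, hqinv⟩, lt_of_le_of_lt hk1 (clB hP3v q.2 hB)⟩
    · have hA : q.1 ∈ ASet ζ := by
        have : q.2 < ζ q.1 := hfix ▸ hqinv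
        exact hq12.trans this
      exact ⟨⟨hq12, hqinv⟩, lt_of_le_of_lt (clA hP4v q.1 hA) hk2⟩

lemma Im_eq : ImSet ζ u = AApart ζ ∪ (BBpart ζ ∪ ImfSet ζ u k) := by
  ext q
  constructor
  · rintro ⟨⟨hq12, hqinv⟩, hneg⟩
    rcases lt_trichotomy q.1 (ζ q.1) with h1 | h1 | h1
    · rcases lt_trichotomy q.2 (ζ q.2) with h2 | h2 | h2
      · exact Or.inl ⟨⟨hq12, hqinv⟩, h1, h2⟩
      · exact Or.inr (Or.inr ⟨⟨hq12, hqinv⟩,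
          Or.inr ⟨h2.symm, (hneg.trans_le (clA hP4v q.1 h1)).le⟩⟩)
      · exact absurd (lt_of_le_of_lt (clA hP4v q.1 h1) (clB hP3v q.2 h2))
          (not_lt.2 hneg.le)
    · have hB : q.2 ∈ BSet ζ := by
        have : ζ q.2 < q.1 := h1 ▸ hqinv
        exact this.trans hq12
      exact Or.inr (Or.inr ⟨⟨hq12, hqinv⟩,
        Or.inl ⟨h1.symm, (clB hP3v q.2 hB).trans hneg⟩⟩)
    · rcases lt_trichotomy q.2 (ζ q.2) with h2 | h2 | h2
      · exact absurd (hqinv.trans h1) (not_lt.2 (hq12.trans h2).le)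
      · exact absurd (hqinv.trans h1) (not_lt.2 (hq12.trans_le h2.le).le)
      · exact Or.inr (Or.inl ⟨⟨hq12, hqinv⟩, h1, h2⟩)
  · have himp : ∀ q : ℕ+ × ℕ+, q ∈ invSet ζ → ¬ u⁻¹ q.1 < u⁻¹ q.2 → q ∈ ImSet ζ u := by
      rintro q ⟨hq12, hqinv⟩ hnot
      refine ⟨⟨hq12, hqinv⟩, ?_⟩
      rcases lt_or_gt_of_ne (w_ne (w := u⁻¹) hq12.ne : u⁻¹ q.1 ≠ u⁻¹ q.2) with h | h
      · exact absurd h hnot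
      · exact h
    rintro (⟨hqI, hA1, hA2⟩ | ⟨hqI, hB1, hB2⟩ | ⟨hqI, (⟨hfix, hk1⟩ | ⟨hfix, hk2⟩)⟩)
    · refine himp _ hqI (fun hpos => ?_)
      exact absurd (hP5v q.1 q.2 hqI.1 hqI.2 hpos).2 (not_lt.2 (clA hP4v q.2 hA2))
    · refine himp _ hqI (fun hpos => ?_)
      exact absurd (clB hP3v q.1 hB1) (not_lt.2 (hP5v q.1 q.2 hqI.1 hqI.2 hpos).1)
    · refine himp _ hqI (fun hpos => ?_)
      exact absurd (hP5v q.1 q.2 hqI.1 hqI.2 hpos).1 (not_le.2 hk1)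
    · refine himp _ hqI (fun hpos => ?_)
      exact absurd (hP5v q.1 q.2 hqI.1 hqI.2 hpos).2 (not_lt.2 hk2)

end WithHyps

end EllUProof
end
noncomputable section
namespace EllUProof
open Set

lemma ILR {ζ : Sinf} {z : ℕ+} (hz : ζ z = z) :
    {x : ℕ+ | x < z ∧ z < ζ x}.ncard = {y : ℕ+ | z < y ∧ ζ y < z}.ncard := by
  set S : Set ℕ+ := Set.Iio z with hSdef
  set T : Set ℕ+ := ⇑ζ ⁻¹' Set.Iio z with hTdef
  have hSfin : S.Finite := Set.finite_Iio z
  have hpre : T = ⇑(ζ⁻¹) '' S := by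
    ext x
    simp only [hTdef, hSdef, Set.mem_preimage, Set.mem_image, Set.mem_Iio]
    constructor
    · intro h; exact ⟨ζ x, h, by simp⟩
    · rintro ⟨j, hj, rfl⟩; simpa using hj
  have hTfin : T.Finite := by rw [hpre]; exact hSfin.image _
  have hcardT : T.ncard = S.ncard := by
    rw [hpre, Set.ncard_image_of_injective _ (ζ⁻¹ : Sinf).injective]
  have h1 : {x : ℕ+ | x < z ∧ z < ζ x} = S \ T := by
    ext x
    simp only [Set.mem_setOf_eq, Set.mem_diff, hSdef, hTdef, Set.mem_Iio, Set.mem_preimage]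
    constructor
    · rintro ⟨ha, hb⟩; exact ⟨ha, not_lt.2 hb.le⟩
    · rintro ⟨ha, hb⟩
      refine ⟨ha, lt_of_le_of_ne (not_lt.1 hb) ?_⟩
      intro he
      exact absurd (ζ.injective (he.symm.trans hz.symm) : x = z) ha.ne
  have h2 : {y : ℕ+ | z < y ∧ ζ y < z} = T \ S := by
    ext y
    simp only [Set.mem_setOf_eq, Set.mem_diff, hSdef, hTdef, Set.mem_Iio, Set.mem_preimage]
    constructor
    · rintro ⟨ha, hb⟩; exact ⟨hb, not_lt.2 ha.le⟩
    · rintro ⟨ha, hb⟩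
      refine ⟨lt_of_le_of_ne (not_lt.1 hb) ?_, ha⟩
      intro he
      rw [← he, hz] at ha
      exact absurd ha (lt_irrefl _)
  have e1 : (S \ T).ncard = S.ncard - (S ∩ T).ncard := by
    rw [← Set.diff_self_inter]
    exact Set.ncard_diff Set.inter_subset_left (hSfin.inter_of_left _)
  have e2 : (T \ S).ncard = T.ncard - (T ∩ S).ncard := by
    rw [← Set.diff_self_inter]
    exact Set.ncard_diff Set.inter_subset_left (hTfin.inter_of_left _)
  rw [h1, h2, e1, e2, hcardT, Set.inter_comm]

lemma fix_cancel {ζ u : Sinf} {k : ℕ+} (hζ : FinSupp ζ) :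
    (IpfSet ζ u k).ncard = (ImfSet ζ u k).ncard := by
  classical
  have hIfin : (invSet ζ).Finite := invSet_finite hζ
  have hIpf_fin : (IpfSet ζ u k).Finite := hIfin.subset (fun q hq => hq.1)
  have hImf_fin : (ImfSet ζ u k).Finite := hIfin.subset (fun q hq => hq.1)
  set fz : ℕ+ × ℕ+ → ℕ+ := fun q => if ζ q.1 = q.1 then q.1 else q.2 with hfz
  set S : Finset (ℕ+ × ℕ+) := hIpf_fin.toFinset with hS
  set T : Finset (ℕ+ × ℕ+) := hImf_fin.toFinset with hT
  set Z : Finset ℕ+ := S.image fz ∪ T.image fz with hZ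
  have hmapS : ∀ q ∈ S, fz q ∈ Z := fun q hq =>
    Finset.mem_union_left _ (Finset.mem_image_of_mem fz hq)
  have hmapT : ∀ q ∈ T, fz q ∈ Z := fun q hq =>
    Finset.mem_union_right _ (Finset.mem_image_of_mem fz hq)
  have hcS := Finset.card_eq_sum_card_fiberwise hmapS
  have hcT := Finset.card_eq_sum_card_fiberwise hmapT
  have hfiber : ∀ z : ℕ+,
      (S.filter (fun q => fz q = z)).card = (T.filter (fun q => fz q = z)).card := by
    intro z
    have hSfz : ((S.filter (fun q => fz q = z)) : Set (ℕ+ × ℕ+)) =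
        {q ∈ IpfSet ζ u k | fz q = z} := by
      ext q
      simp only [Finset.coe_filter, Set.mem_setOf_eq, hS, Set.Finite.mem_toFinset]
    have hTfz : ((T.filter (fun q => fz q = z)) : Set (ℕ+ × ℕ+)) =
        {q ∈ ImfSet ζ u k | fz q = z} := by
      ext q
      simp only [Finset.coe_filter, Set.mem_setOf_eq, hT, Set.Finite.mem_toFinset]
    have hcard1 : (S.filter (fun q => fz q = z)).card = {q ∈ IpfSet ζ u k | fz q = z}.ncard := by
      rw [← hSfz, Set.ncard_coe_finset]
    have hcard2 : (T.filter (fun q => fz q = z)).card = {q ∈ ImfSet ζ u k | fz q = z}.ncard := by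
      rw [← hTfz, Set.ncard_coe_finset]
    rw [hcard1, hcard2]
    by_cases hz : ζ z = z
    · have hinj1 : Function.Injective (fun y : ℕ+ => (z, y)) :=
        fun a b h => (Prod.ext_iff.1 h).2
      have hinj2 : Function.Injective (fun x : ℕ+ => (x, z)) :=
        fun a b h => (Prod.ext_iff.1 h).1
      by_cases hk : u⁻¹ z ≤ k
      · have hfib1 : {q ∈ IpfSet ζ u k | fz q = z} =
            (fun y : ℕ+ => (z, y)) '' {y : ℕ+ | z < y ∧ ζ y < z} := by
          ext q
          constructor
          · rintro ⟨⟨⟨hq12, hqinv⟩, hd⟩, hfq⟩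
            by_cases h1 : ζ q.1 = q.1
            · have hq1z : q.1 = z := by rw [hfz] at hfq; simpa [h1] using hfq
              refine ⟨q.2, ⟨hq1z ▸ hq12, ?_⟩, by rw [← hq1z]⟩
              calc ζ q.2 < ζ q.1 := hqinv
                _ = q.1 := h1
                _ = z := hq1z
            · have hq2z : q.2 = z := by rw [hfz] at hfq; simpa [h1] using hfq
              rcases hd with ⟨h1', -⟩ | ⟨-, hk2⟩
              · exact absurd h1' h1
              · rw [hq2z] at hk2
                exact absurd hk hk2.not_ge
          · rintro ⟨y, ⟨hy1, hy2⟩, rfl⟩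
            refine ⟨⟨⟨hy1, by rw [hz]; exact hy2⟩, Or.inl ⟨hz, hk⟩⟩, ?_⟩
            rw [hfz]
            simp [hz]
        have hfib2 : {q ∈ ImfSet ζ u k | fz q = z} =
            (fun x : ℕ+ => (x, z)) '' {x : ℕ+ | x < z ∧ z < ζ x} := by
          ext q
          constructor
          · rintro ⟨⟨⟨hq12, hqinv⟩, hd⟩, hfq⟩
            by_cases h1 : ζ q.1 = q.1
            · have hq1z : q.1 = z := by rw [hfz] at hfq; simpa [h1] using hfq
              rcases hd with ⟨-, hk1⟩ | ⟨h2, -⟩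
              · rw [hq1z] at hk1
                exact absurd hk hk1.not_ge
              · exact absurd (not_both_fixed ⟨hq12, hqinv⟩ h1 h2) id
            · have hq2z : q.2 = z := by rw [hfz] at hfq; simpa [h1] using hfq
              rcases hd with ⟨h1', -⟩ | ⟨h2, -⟩
              · exact absurd h1' h1
              · refine ⟨q.1, ⟨hq2z ▸ hq12, ?_⟩, by rw [← hq2z]⟩
                have : ζ q.2 = z := by rw [hq2z, hz]
                calc z = ζ q.2 := this.symm
                  _ < ζ q.1 := hqinv
          · rintro ⟨x, ⟨hx1, hx2⟩, rfl⟩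
            have hxnf : ζ x ≠ x := fun h => absurd (hx1.trans hx2) (not_lt.2 h.le)
            refine ⟨⟨⟨hx1, by rw [hz]; exact hx2⟩, Or.inr ⟨hz, hk⟩⟩, ?_⟩
            rw [hfz]
            simp [hxnf]
        rw [hfib1, hfib2, Set.ncard_image_of_injective _ hinj1,
          Set.ncard_image_of_injective _ hinj2, ILR hz]
      · push_neg at hk
        have hfib1 : {q ∈ IpfSet ζ u k | fz q = z} =
            (fun x : ℕ+ => (x, z)) '' {x : ℕ+ | x < z ∧ z < ζ x} := by
          ext q
          constructor
          · rintro ⟨⟨⟨hq12, hqinv⟩, hd⟩, hfq⟩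
            by_cases h1 : ζ q.1 = q.1
            · have hq1z : q.1 = z := by rw [hfz] at hfq; simpa [h1] using hfq
              rcases hd with ⟨-, hk1⟩ | ⟨h2, -⟩
              · rw [hq1z] at hk1
                exact absurd hk1 hk.not_ge
              · exact absurd (not_both_fixed ⟨hq12, hqinv⟩ h1 h2) id
            · have hq2z : q.2 = z := by rw [hfz] at hfq; simpa [h1] using hfq
              rcases hd with ⟨h1', -⟩ | ⟨h2, -⟩
              · exact absurd h1' h1
              · refine ⟨q.1, ⟨hq2z ▸ hq12, ?_⟩, by rw [← hq2z]⟩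
                have : ζ q.2 = z := by rw [hq2z, hz]
                calc z = ζ q.2 := this.symm
                  _ < ζ q.1 := hqinv
          · rintro ⟨x, ⟨hx1, hx2⟩, rfl⟩
            have hxnf : ζ x ≠ x := fun h => absurd (hx1.trans hx2) (not_lt.2 h.le)
            refine ⟨⟨⟨hx1, by rw [hz]; exact hx2⟩, Or.inr ⟨hz, hk⟩⟩, ?_⟩
            rw [hfz]
            simp [hxnf]
        have hfib2 : {q ∈ ImfSet ζ u k | fz q = z} =
            (fun y : ℕ+ => (z, y)) '' {y : ℕ+ | z < y ∧ ζ y < z} := by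
          ext q
          constructor
          · rintro ⟨⟨⟨hq12, hqinv⟩, hd⟩, hfq⟩
            by_cases h1 : ζ q.1 = q.1
            · have hq1z : q.1 = z := by rw [hfz] at hfq; simpa [h1] using hfq
              refine ⟨q.2, ⟨hq1z ▸ hq12, ?_⟩, by rw [← hq1z]⟩
              calc ζ q.2 < ζ q.1 := hqinv
                _ = q.1 := h1
                _ = z := hq1z
            · have hq2z : q.2 = z := by rw [hfz] at hfq; simpa [h1] using hfq
              rcases hd with ⟨h1', -⟩ | ⟨-, hk2⟩
              · exact absurd h1' h1
              · rw [hq2z] at hk2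
                exact absurd hk2 hk.not_ge
          · rintro ⟨y, ⟨hy1, hy2⟩, rfl⟩
            refine ⟨⟨⟨hy1, by rw [hz]; exact hy2⟩, Or.inl ⟨hz, hk⟩⟩, ?_⟩
            rw [hfz]
            simp [hz]
        rw [hfib1, hfib2, Set.ncard_image_of_injective _ hinj1,
          Set.ncard_image_of_injective _ hinj2, ILR hz]
    · have hfib1 : {q ∈ IpfSet ζ u k | fz q = z} = ∅ := by
        ext q
        simp only [Set.mem_setOf_eq, Set.mem_empty_iff_false, iff_false]
        rintro ⟨⟨hqI, hd⟩, hfq⟩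
        by_cases h1 : ζ q.1 = q.1
        · have hq1z : q.1 = z := by rw [hfz] at hfq; simpa [h1] using hfq
          exact hz (hq1z ▸ h1)
        · have hq2z : q.2 = z := by rw [hfz] at hfq; simpa [h1] using hfq
          rcases hd with ⟨h1', -⟩ | ⟨h2, -⟩
          · exact h1 h1'
          · exact hz (hq2z ▸ h2)
      have hfib2 : {q ∈ ImfSet ζ u k | fz q = z} = ∅ := by
        ext q
        simp only [Set.mem_setOf_eq, Set.mem_empty_iff_false, iff_false]
        rintro ⟨⟨hqI, hd⟩, hfq⟩
        by_cases h1 : ζ q.1 = q.1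
        · have hq1z : q.1 = z := by rw [hfz] at hfq; simpa [h1] using hfq
          exact hz (hq1z ▸ h1)
        · have hq2z : q.2 = z := by rw [hfz] at hfq; simpa [h1] using hfq
          rcases hd with ⟨h1', -⟩ | ⟨h2, -⟩
          · exact h1 h1'
          · exact hz (hq2z ▸ h2)
      rw [hfib1, hfib2]
  have : S.card = T.card := by
    rw [hcS, hcT]
    exact Finset.sum_congr rfl (fun z _ => hfiber z)
  rw [← Set.ncard_coe_finset S, ← Set.ncard_coe_finset T] at this
  rwa [hS, hT, Set.Finite.coe_toFinset, Set.Finite.coe_toFinset] at this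

end EllUProof
end
noncomputable section
namespace EllUProof
open Set

lemma image_up (ζ : Sinf) : (⇑(ζ⁻¹)) '' (upS ζ) = ASet ζ := by
  ext x
  simp only [Set.mem_image, upS, Set.mem_setOf_eq, ASet]
  constructor
  · rintro ⟨j, hj, rfl⟩
    simpa using hj
  · intro hx
    exact ⟨ζ x, by simpa using hx, by simp⟩

lemma image_dw (ζ : Sinf) : (⇑(ζ⁻¹)) '' (dwS ζ) = BSet ζ := by
  ext x
  simp only [Set.mem_image, dwS, Set.mem_setOf_eq, BSet]
  constructor
  · rintro ⟨j, hj, rfl⟩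
    simpa using hj
  · intro hx
    exact ⟨ζ x, by simpa using hx, by simp⟩

lemma AB_not_eq {ζ : Sinf} {x : ℕ+} (hA : x ∈ ASet ζ) (hB : x ∈ BSet ζ) : False :=
  absurd (hA.trans hB) (lt_irrefl x)

lemma term1_split {ζ : Sinf} (hζ : FinSupp ζ) :
    ({p : ℕ+ × ℕ+ | p.1 ∈ upS ζ ∧ p.2 ∈ dwS ζ ∧ p.2 < p.1}.ncard : ℤ) =
      ((ABpart ζ).ncard : ℤ) +
      ({p : ℕ+ × ℕ+ | p.1 ∈ Set.image (⇑(ζ⁻¹)) (upS ζ) ∧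
          p.2 ∈ Set.image (⇑(ζ⁻¹)) (dwS ζ) ∧ p.2 < p.1}.ncard : ℤ) := by
  set G1 : Set (ℕ+ × ℕ+) := {q | q.1 ∈ ASet ζ ∧ q.2 ∈ BSet ζ ∧ ζ q.2 < ζ q.1} with hG1
  set G2 : Set (ℕ+ × ℕ+) := {q | q.1 ∈ ASet ζ ∧ q.2 ∈ BSet ζ ∧ q.2 < q.1} with hG2
  have hterm2 : {p : ℕ+ × ℕ+ | p.1 ∈ Set.image (⇑(ζ⁻¹)) (upS ζ) ∧
      p.2 ∈ Set.image (⇑(ζ⁻¹)) (dwS ζ) ∧ p.2 < p.1} = G2 := by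
    rw [image_up, image_dw]
  have hterm1 : {p : ℕ+ × ℕ+ | p.1 ∈ upS ζ ∧ p.2 ∈ dwS ζ ∧ p.2 < p.1} =
      (fun q : ℕ+ × ℕ+ => (ζ q.1, ζ q.2)) '' G1 := by
    ext p
    constructor
    · rintro ⟨h1, h2, h3⟩
      refine ⟨(ζ⁻¹ p.1, ζ⁻¹ p.2), ⟨?_, ?_, ?_⟩, ?_⟩
      · simpa [ASet, upS] using h1
      · simpa [BSet, dwS] using h2
      · simpa using h3
      · simp
    · rintro ⟨q, ⟨h1, h2, h3⟩, rfl⟩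
      refine ⟨?_, ?_, h3⟩
      · simpa [upS, ASet] using h1
      · simpa [dwS, BSet] using h2
  have hinj : Function.Injective (fun q : ℕ+ × ℕ+ => (ζ q.1, ζ q.2)) := by
    intro p q h
    rw [Prod.mk.injEq] at h
    exact Prod.ext (ζ.injective h.1) (ζ.injective h.2)
  have hsplit : G1 = ABpart ζ ∪ G2 := by
    ext q
    constructor
    · rintro ⟨h1, h2, h3⟩
      have hne : q.1 ≠ q.2 := by
        intro h
        exact AB_not_eq (h ▸ h1) h2
      rcases lt_or_gt_of_ne hne with h | h
      · exact Or.inl ⟨⟨h, h3⟩, h1, h2⟩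
      · exact Or.inr ⟨h1, h2, h⟩
    · rintro (⟨⟨h12, hinv⟩, h1, h2⟩ | ⟨h1, h2, h3⟩)
      · exact ⟨h1, h2, hinv⟩
      · exact ⟨h1, h2, (h2.trans h3).trans h1⟩
  have hdisj : Disjoint (ABpart ζ) G2 := by
    rw [Set.disjoint_left]
    rintro q ⟨⟨h12, -⟩, -⟩ ⟨-, -, h21⟩
    exact absurd h12 (not_lt.2 h21.le)
  have hABfin : (ABpart ζ).Finite := (invSet_finite hζ).subset (fun q hq => hq.1)
  have hG2fin : G2.Finite := by
    have hAfin : (ASet ζ).Finite := hζ.subset (fun i hi => (hi : i < ζ i).ne')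
    have hBfin : (BSet ζ).Finite := hζ.subset (fun i hi => (hi : ζ i < i).ne)
    exact (hAfin.prod hBfin).subset (fun q hq => ⟨hq.1, hq.2.1⟩)
  have e1 : G1.ncard = (ABpart ζ).ncard + G2.ncard := by
    rw [hsplit, Set.ncard_union_eq hdisj hABfin hG2fin]
  rw [hterm1, hterm2, Set.ncard_image_of_injective _ hinj, e1]
  push_cast
  ring

lemma term3_eq (ζ u : Sinf) :
    {p : ℕ+ × ℕ+ | p.1 ∈ Set.image (⇑(ζ⁻¹)) (upS ζ) ∧
        p.2 ∈ Set.image (⇑(ζ⁻¹)) (upS ζ) ∧ p.1 < p.2 ∧ ζ p.2 < ζ p.1} = AApart ζ := by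
  rw [image_up]
  ext q
  constructor
  · rintro ⟨h1, h2, h3, h4⟩
    exact ⟨⟨h3, h4⟩, h1, h2⟩
  · rintro ⟨⟨h3, h4⟩, h1, h2⟩
    exact ⟨h1, h2, h3, h4⟩

lemma term4_eq (ζ u : Sinf) :
    {p : ℕ+ × ℕ+ | p.1 ∈ Set.image (⇑(ζ⁻¹)) (dwS ζ) ∧
        p.2 ∈ Set.image (⇑(ζ⁻¹)) (dwS ζ) ∧ p.1 < p.2 ∧ ζ p.2 < ζ p.1} = BBpart ζ := by
  rw [image_dw]
  ext q
  constructor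
  · rintro ⟨h1, h2, h3, h4⟩
    exact ⟨⟨h3, h4⟩, h1, h2⟩
  · rintro ⟨⟨h3, h4⟩, h1, h2⟩
    exact ⟨h1, h2, h3, h4⟩

lemma master {ζ u : Sinf} {k : ℕ+} (hζ : FinSupp ζ) (hu : FinSupp u)
    (hch : kBruhat k u (ζ * u)) :
    len u ≤ len (ζ * u) ∧
    (len (ζ * u) : ℤ) - len u =
      ({p : ℕ+ × ℕ+ | p.1 ∈ upS ζ ∧ p.2 ∈ dwS ζ ∧ p.2 < p.1}.ncard : ℤ) -
      ({p : ℕ+ × ℕ+ | p.1 ∈ Set.image (⇑(ζ⁻¹)) (upS ζ) ∧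
          p.2 ∈ Set.image (⇑(ζ⁻¹)) (dwS ζ) ∧ p.2 < p.1}.ncard : ℤ) -
      ({p : ℕ+ × ℕ+ | p.1 ∈ Set.image (⇑(ζ⁻¹)) (upS ζ) ∧
          p.2 ∈ Set.image (⇑(ζ⁻¹)) (upS ζ) ∧ p.1 < p.2 ∧ ζ p.2 < ζ p.1}.ncard : ℤ) -
      ({p : ℕ+ × ℕ+ | p.1 ∈ Set.image (⇑(ζ⁻¹)) (dwS ζ) ∧
          p.2 ∈ Set.image (⇑(ζ⁻¹)) (dwS ζ) ∧ p.1 < p.2 ∧ ζ p.2 < ζ p.1}.ncard : ℤ) := by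
  obtain ⟨hw, hle, h3, h4, h5⟩ := chain_props hch hu
  refine ⟨hle, ?_⟩
  have hP3v : ∀ x : ℕ+, u⁻¹ x ≤ k → x ≤ ζ x := by
    intro x hx
    have := h3 (u⁻¹ x) hx
    simpa [Equiv.Perm.mul_apply] using this
  have hP4v : ∀ x : ℕ+, k < u⁻¹ x → ζ x ≤ x := by
    intro x hx
    have := h4 (u⁻¹ x) hx
    simpa [Equiv.Perm.mul_apply] using this
  have hP5v : ∀ x y : ℕ+, x < y → ζ y < ζ x → u⁻¹ x < u⁻¹ y → u⁻¹ x ≤ k ∧ k < u⁻¹ y := by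
    intro x y hxy hzxy hpos
    refine h5 (u⁻¹ x) (u⁻¹ y) hpos ?_ ?_
    · simpa using hxy
    · simpa [Equiv.Perm.mul_apply] using hzxy
  have hIfin : (invSet ζ).Finite := invSet_finite hζ
  have hABfin : (ABpart ζ).Finite := hIfin.subset (fun q hq => hq.1)
  have hAAfin : (AApart ζ).Finite := hIfin.subset (fun q hq => hq.1)
  have hBBfin : (BBpart ζ).Finite := hIfin.subset (fun q hq => hq.1)
  have hIpffin : (IpfSet ζ u k).Finite := hIfin.subset (fun q hq => hq.1)
  have hImffin : (ImfSet ζ u k).Finite := hIfin.subset (fun q hq => hq.1)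
  have dAB : Disjoint (ABpart ζ) (IpfSet ζ u k) := by
    rw [Set.disjoint_left]
    rintro q ⟨-, hA, hB⟩ ⟨-, (⟨hf, -⟩ | ⟨hf, -⟩)⟩
    · exact absurd hA (by rw [ASet, Set.mem_setOf_eq, hf]; exact lt_irrefl _)
    · exact absurd hB (by rw [BSet, Set.mem_setOf_eq, hf]; exact lt_irrefl _)
  have dAA : Disjoint (AApart ζ) (BBpart ζ ∪ ImfSet ζ u k) := by
    rw [Set.disjoint_left]
    rintro q ⟨-, hA1, hA2⟩ (⟨-, hB1, -⟩ | ⟨-, (⟨hf, -⟩ | ⟨hf, -⟩)⟩)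
    · exact AB_not_eq hA1 hB1
    · exact absurd hA1 (by rw [ASet, Set.mem_setOf_eq, hf]; exact lt_irrefl _)
    · exact absurd hA2 (by rw [ASet, Set.mem_setOf_eq, hf]; exact lt_irrefl _)
  have dBB : Disjoint (BBpart ζ) (ImfSet ζ u k) := by
    rw [Set.disjoint_left]
    rintro q ⟨-, hB1, hB2⟩ ⟨-, (⟨hf, -⟩ | ⟨hf, -⟩)⟩
    · exact absurd hB1 (by rw [BSet, Set.mem_setOf_eq, hf]; exact lt_irrefl _)
    · exact absurd hB2 (by rw [BSet, Set.mem_setOf_eq, hf]; exact lt_irrefl _)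
  have eIp : (IpSet ζ u).ncard = (ABpart ζ).ncard + (IpfSet ζ u k).ncard := by
    rw [Ip_eq hP4v hP3v hP5v, Set.ncard_union_eq dAB hABfin hIpffin]
  have eIm : (ImSet ζ u).ncard =
      (AApart ζ).ncard + ((BBpart ζ).ncard + (ImfSet ζ u k).ncard) := by
    rw [Im_eq hP4v hP3v hP5v, Set.ncard_union_eq dAA hAAfin (hBBfin.union hImffin),
      Set.ncard_union_eq dBB hBBfin hImffin]
  have hdiff := len_diff_eq hζ hu
  have hcancel := fix_cancel (u := u) (k := k) hζ
  have ht1 := term1_split hζ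
  rw [term3_eq ζ u, term4_eq ζ u]
  rw [hdiff, eIp, eIm]
  rw [ht1]
  push_cast
  rw [hcancel]
  ring

end EllUProof
end
noncomputable section
namespace EllUProof
open Set

lemma diff_mem_supp {u w : Sinf} {x : ℕ+} (h : u x ≠ w x) :
    x ∈ {i : ℕ+ | u i ≠ i} ∪ {i : ℕ+ | w i ≠ i} := by
  by_contra hc
  simp only [Set.mem_union, Set.mem_setOf_eq] at hc
  push_neg at hc
  exact h (hc.1.trans hc.2.symm)

lemma greedy {u w : Sinf} {k : ℕ+} (hu : FinSupp u) (hw : FinSupp w) (hne : u ≠ w)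
    (hi1 : ∀ a, a ≤ k → u a ≤ w a) (hi2 : ∀ b, k < b → w b ≤ u b)
    (hii : ∀ a b : ℕ+, a < b → u a < u b → w b < w a → a ≤ k ∧ k < b) :
    ∃ a b : ℕ+, a ≤ k ∧ k < b ∧ u a < u b ∧ u b ≤ w a ∧
      u a ≠ w a ∧ u b ≠ w b ∧
      len (u * Equiv.swap a b) = len u + 1 ∧
      (∀ a', a' ≤ k → (u * Equiv.swap a b) a' ≤ w a') ∧
      (∀ b', k < b' → w b' ≤ (u * Equiv.swap a b) b') ∧
      (∀ s t : ℕ+, s < t → (u * Equiv.swap a b) s < (u * Equiv.swap a b) t →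
        w t < w s → s ≤ k ∧ k < t) := by
  -- some position ≤ k differs
  have hDne : ∃ a : ℕ+, a ≤ k ∧ u a ≠ w a := by
    by_contra hcon
    push_neg at hcon
    apply hne
    apply Equiv.ext
    by_contra hx
    push_neg at hx
    obtain ⟨x0, hx0⟩ := hx
    set T := {b : ℕ+ | u b ≠ w b} with hT
    have hTfin : T.Finite := (hu.union hw).subset (fun x hx => diff_mem_supp hx)
    obtain ⟨b1, hb1T, hb1min⟩ := Set.exists_min_image T (fun b => w b) hTfin ⟨x0, hx0⟩
    have hb1k : k < b1 := by
      by_contra h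
      push_neg at h
      exact hb1T (hcon b1 h)
    have hwb1 : w b1 < u b1 := lt_of_le_of_ne (hi2 b1 hb1k) (Ne.symm hb1T)
    have huq : u (u⁻¹ (w b1)) = w b1 := u.apply_symm_apply _
    have hqb : u⁻¹ (w b1) ≠ b1 := by
      intro h
      rw [h] at huq
      exact hb1T huq
    have hqk : k < u⁻¹ (w b1) := by
      by_contra h
      push_neg at h
      have := (hcon _ h) ▸ huq
      exact hqb (w.injective this)
    have hqT : u⁻¹ (w b1) ∈ T := by
      intro h
      rw [huq] at h
      exact hqb (w.injective h.symm)
    have h1 := hb1min _ hqT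
    have h2 := hi2 _ hqk
    rw [huq] at h2
    exact hqb (w.injective (le_antisymm h2 h1))
  set D := {a : ℕ+ | a ≤ k ∧ u a ≠ w a} with hD
  have hDfin : D.Finite := (Set.finite_Iic k).subset (fun a ha => ha.1)
  obtain ⟨a, ⟨hak, hane⟩, hamax'⟩ := Set.exists_max_image D (fun a => u a) hDfin hDne
  have hamax : ∀ a', a' ≤ k → u a' ≠ w a' → u a' ≤ u a :=
    fun a' h1 h2 => hamax' a' ⟨h1, h2⟩
  have haw : u a < w a := lt_of_le_of_ne (hi1 a hak) hane
  set C := {b : ℕ+ | k < b ∧ u a < u b ∧ u b ≤ w a ∧ u b ≠ w b} with hC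
  have hCfin : C.Finite := (hu.union hw).subset (fun x hx => diff_mem_supp hx.2.2.2)
  have hCne : C.Nonempty := by
    have hup : u (u⁻¹ (w a)) = w a := u.apply_symm_apply _
    have hpa : u⁻¹ (w a) ≠ a := by
      intro h
      rw [h] at hup
      exact hane hup
    have hpne : u (u⁻¹ (w a)) ≠ w (u⁻¹ (w a)) := by
      intro h
      rw [hup] at h
      exact hpa (w.injective h.symm)
    have hpk : k < u⁻¹ (w a) := by
      by_contra h
      push_neg at h
      have := hamax _ h hpne
      rw [hup] at this
      exact absurd haw (not_lt.2 this)
    exact ⟨u⁻¹ (w a), hpk, by rw [hup]; exact haw, by rw [hup], hpne⟩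
  obtain ⟨b, ⟨hbk, hbu, hbw, hbne⟩, hbmin'⟩ := Set.exists_min_image C (fun b => u b) hCfin hCne
  have hab : a < b := hak.trans_lt hbk
  have hwb : w b < u b := lt_of_le_of_ne (hi2 b hbk) (Ne.symm hbne)
  -- key: w b ≤ u a
  have hwb_low : w b ≤ u a := by
    by_contra h
    push_neg at h
    have huq : u (u⁻¹ (w b)) = w b := u.apply_symm_apply _
    have hqb : u⁻¹ (w b) ≠ b := by
      intro h'
      rw [h'] at huq
      exact hbne huq
    by_cases hqk : u⁻¹ (w b) ≤ k
    · by_cases hqe : u (u⁻¹ (w b)) = w (u⁻¹ (w b))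
      · rw [huq] at hqe
        exact hqb (w.injective hqe.symm)
      · have := hamax _ hqk hqe
        rw [huq] at this
        exact absurd h (not_lt.2 this)
    · push_neg at hqk
      have hqe : u (u⁻¹ (w b)) ≠ w (u⁻¹ (w b)) := by
        intro h'
        rw [huq] at h'
        exact hqb (w.injective h'.symm)
      have hqC : u⁻¹ (w b) ∈ C := by
        refine ⟨hqk, by rw [huq]; exact h, by rw [huq]; exact (hwb.le.trans hbw), hqe⟩
      have := hbmin' _ hqC
      rw [huq] at this
      exact absurd hwb (not_lt.2 this)
  -- no middle values
  have hmid : ∀ e, a < e → e < b → u e < u a ∨ u b < u e := by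
    intro e hae heb
    by_contra hcon
    push_neg at hcon
    obtain ⟨h1, h2⟩ := hcon
    have h1' : u a < u e := lt_of_le_of_ne h1 (w_ne hae.ne)
    have h2' : u e < u b := lt_of_le_of_ne h2 (w_ne heb.ne)
    by_cases hek : e ≤ k
    · by_cases hee : u e = w e
      · have hwe : w e < w a := by
          rw [← hee]
          exact h2'.trans_le hbw
        exact absurd (hii a e hae h1' hwe).2 (not_lt.2 hek)
      · exact absurd h1' (not_lt.2 (hamax e hek hee))
    · push_neg at hek
      by_cases hee : u e = w e
      · have hwe : w b < w e := by
          rw [← hee]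
          exact hwb_low.trans_lt h1'
        exact absurd (hii e b heb h2' hwe).1 (not_le.2 hek)
      · have heC : e ∈ C := ⟨hek, h1', h2'.le.trans hbw, hee⟩
        exact absurd h2' (not_lt.2 (hbmin' e heC))
  have hcov : len (u * Equiv.swap a b) = len u + 1 := cover_of hu hab hbu hmid
  have hu'a : (u * Equiv.swap a b) a = u b := by
    simp [Equiv.Perm.mul_apply, Equiv.swap_apply_left]
  have hu'b : (u * Equiv.swap a b) b = u a := by
    simp [Equiv.Perm.mul_apply, Equiv.swap_apply_right]
  have hu'x : ∀ x, x ≠ a → x ≠ b → (u * Equiv.swap a b) x = u x := by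
    intro x h1 h2
    simp [Equiv.Perm.mul_apply, Equiv.swap_apply_of_ne_of_ne h1 h2]
  refine ⟨a, b, hak, hbk, hbu, hbw, hane, hbne, hcov, ?_, ?_, ?_⟩
  · intro a' ha'
    by_cases h1 : a' = a
    · subst h1
      rw [hu'a]
      exact hbw
    · have h2 : a' ≠ b := fun h => absurd (h ▸ ha') (not_le.2 hbk)
      rw [hu'x a' h1 h2]
      exact hi1 a' ha'
  · intro b' hb'
    by_cases h1 : b' = b
    · subst h1
      rw [hu'b]
      exact hwb_low
    · have h2 : b' ≠ a := fun h => absurd (h ▸ hak) (not_le.2 hb')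
      rw [hu'x b' h2 h1]
      exact hi2 b' hb'
  · intro s t hst hasc hdes
    by_cases hsa : s = a
    · subst hsa
      by_cases htb : t = b
      · subst htb
        rw [hu'a, hu'b] at hasc
        exact absurd hbu (not_lt.2 hasc.le)
      · have hta : t ≠ s := hst.ne'
        rw [hu'a, hu'x t hta htb] at hasc
        exact hii s t hst (hbu.trans hasc) hdes
    · by_cases hta : t = a
      · subst hta
        have hsb : s ≠ b := fun h => absurd (h ▸ hst) (not_lt.2 hab.le)
        rw [hu'x s hsa hsb, hu'a] at hasc
        by_cases hse : u s = w s
        · have : u s < u s := by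
            calc u s < u b := hasc
              _ ≤ w t := hbw
              _ < w s := hdes
              _ = u s := hse.symm
          exact absurd this (lt_irrefl _)
        · have hsk : s ≤ k := (hst.le).trans hak
          have hus : u s < u t := lt_of_le_of_ne (hamax s hsk hse) (w_ne hsa)
          exact absurd (hii s t hst hus hdes).2 (not_lt.2 hak)
      · by_cases hsb : s = b
        · subst hsb
          have htb : t ≠ s := hst.ne'
          rw [hu'b, hu'x t hta htb] at hasc
          rcases lt_or_gt_of_ne (w_ne (w := u) hst.ne : u s ≠ u t) with h | h
          · exact absurd (hii s t hst h hdes).1 (not_le.2 hbk)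
          · have hwtlt : w t < u t := by
              calc w t < w s := hdes
                _ ≤ u a := hwb_low
                _ < u t := hasc
            have htC : t ∈ C := by
              refine ⟨hbk.trans hst, hasc, (h.le).trans hbw, ?_⟩
              intro hte
              rw [hte] at hwtlt
              exact absurd hwtlt (lt_irrefl _)
            exact absurd h (not_lt.2 (hbmin' t htC))
        · by_cases htb : t = b
          · subst htb
            rw [hu'x s hsa hsb, hu'b] at hasc
            exact hii s t hst (hasc.trans hbu) hdes
          · rw [hu'x s hsa hsb, hu'x t hta htb] at hasc
            exact hii s t hst hasc hdes

end EllUProof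
end
noncomputable section
namespace EllUProof
open Set

lemma kBruhat_of_conditions {u w : Sinf} {k : ℕ+} (hu : FinSupp u) (hw : FinSupp w)
    (hi1 : ∀ a, a ≤ k → u a ≤ w a) (hi2 : ∀ b, k < b → w b ≤ u b)
    (hii : ∀ a b : ℕ+, a < b → u a < u b → w b < w a → a ≤ k ∧ k < b) :
    kBruhat k u w := by
  classical
  set S0 : Finset ℕ+ := (hu.union hw).toFinset with hS0
  have hS0u : ∀ x : ℕ+, u x ≠ x → x ∈ S0 := by
    intro x hx
    rw [hS0, Set.Finite.mem_toFinset]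
    exact Or.inl hx
  have hS0w : ∀ x : ℕ+, w x ≠ x → x ∈ S0 := by
    intro x hx
    rw [hS0, Set.Finite.mem_toFinset]
    exact Or.inr hx
  set μ : Sinf → ℕ := fun v => ∑ x ∈ S0, (if x ≤ k then (w x : ℕ) - (v x : ℕ) else 0) with hμ
  suffices H : ∀ (n : ℕ) (v : Sinf), FinSupp v → (∀ x : ℕ+, v x ≠ x → x ∈ S0) →
      (∀ a, a ≤ k → v a ≤ w a) → (∀ b, k < b → w b ≤ v b) →
      (∀ a b : ℕ+, a < b → v a < v b → w b < w a → a ≤ k ∧ k < b) →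
      μ v ≤ n → kBruhat k v w by
    exact H (μ u) u hu hS0u hi1 hi2 hii (le_refl _)
  intro n
  induction n with
  | zero =>
    intro v hv hvS h1 h2 h3 hμv
    by_cases hvw : v = w
    · rw [hvw]
      exact Relation.ReflTransGen.refl
    · obtain ⟨a, b, hak, hbk, hab, hbwa, hane, hbne, -⟩ := greedy hv hw hvw h1 h2 h3
      exfalso
      have haS0 : a ∈ S0 := by
        by_cases hva : v a = a
        · exact hS0w a (fun hwa => hane (hva.trans hwa.symm))
        · exact hvS a hva
      have hterm : 0 < (if a ≤ k then (w a : ℕ) - (v a : ℕ) else 0) := by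
        rw [if_pos hak]
        have : v a < w a := lt_of_le_of_ne (h1 a hak) hane
        have h' : (v a : ℕ) < (w a : ℕ) := by exact_mod_cast this
        omega
      have hpos : 0 < μ v := by
        rw [hμ]
        exact Finset.sum_pos' (fun x _ => Nat.zero_le _) ⟨a, haS0, hterm⟩
      omega
  | succ n ih =>
    intro v hv hvS h1 h2 h3 hμv
    by_cases hvw : v = w
    · rw [hvw]
      exact Relation.ReflTransGen.refl
    · obtain ⟨a, b, hak, hbk, hab, hbwa, hane, hbne, hcov, hg1, hg2, hg3⟩ :=
        greedy hv hw hvw h1 h2 h3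
      have hv'a : (v * Equiv.swap a b) a = v b := by
        simp [Equiv.Perm.mul_apply, Equiv.swap_apply_left]
      have hv'b : (v * Equiv.swap a b) b = v a := by
        simp [Equiv.Perm.mul_apply, Equiv.swap_apply_right]
      have hv'x : ∀ x, x ≠ a → x ≠ b → (v * Equiv.swap a b) x = v x := by
        intro x hx1 hx2
        simp [Equiv.Perm.mul_apply, Equiv.swap_apply_of_ne_of_ne hx1 hx2]
      have hv'fin : FinSupp (v * Equiv.swap a b) := finSupp_mul hv (finSupp_swap a b)
      have hcover : kCover k v (v * Equiv.swap a b) := ⟨hcov, a, b, hak, hbk, rfl⟩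
      have haS0 : a ∈ S0 := by
        by_cases hva : v a = a
        · exact hS0w a (fun hwa => hane (hva.trans hwa.symm))
        · exact hvS a hva
      have hv'S : ∀ x : ℕ+, (v * Equiv.swap a b) x ≠ x → x ∈ S0 := by
        intro x hx
        by_cases hx1 : x = a
        · rw [hx1]; exact haS0
        · by_cases hx2 : x = b
          · subst hx2
            by_cases hvx : v x = x
            · exact hS0w x (fun hwx => hbne (hvx.trans hwx.symm))
            · exact hvS x hvx
          · rw [hv'x x hx1 hx2] at hx
            exact hvS x hx
      -- measure decreases
      have hsum : ∀ x ∈ S0.erase a,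
          (if x ≤ k then (w x : ℕ) - ((v * Equiv.swap a b) x : ℕ) else 0) =
          (if x ≤ k then (w x : ℕ) - (v x : ℕ) else 0) := by
        intro x hx
        have hxa : x ≠ a := Finset.ne_of_mem_erase hx
        by_cases hxk : x ≤ k
        · have hxb : x ≠ b := fun h => absurd (h ▸ hxk) (not_le.2 hbk)
          rw [if_pos hxk, if_pos hxk, hv'x x hxa hxb]
        · rw [if_neg hxk, if_neg hxk]
      have e1 : μ (v * Equiv.swap a b) =
          (if a ≤ k then (w a : ℕ) - ((v * Equiv.swap a b) a : ℕ) else 0) +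
          ∑ x ∈ S0.erase a, (if x ≤ k then (w x : ℕ) - ((v * Equiv.swap a b) x : ℕ) else 0) := by
        rw [hμ]
        exact (Finset.add_sum_erase S0 _ haS0).symm
      have e2 : μ v =
          (if a ≤ k then (w a : ℕ) - (v a : ℕ) else 0) +
          ∑ x ∈ S0.erase a, (if x ≤ k then (w x : ℕ) - (v x : ℕ) else 0) := by
        rw [hμ]
        exact (Finset.add_sum_erase S0 _ haS0).symm
      have hcast1 : (v a : ℕ) < (v b : ℕ) := by exact_mod_cast hab
      have hcast2 : (v b : ℕ) ≤ (w a : ℕ) := by exact_mod_cast hbwa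
      have hμ' : μ (v * Equiv.swap a b) < μ v := by
        rw [e1, e2, Finset.sum_congr rfl hsum, if_pos hak, if_pos hak, hv'a]
        omega
      exact Relation.ReflTransGen.head hcover
        (ih (v * Equiv.swap a b) hv'fin hv'S hg1 hg2 hg3 (by omega))

end EllUProof
end
noncomputable section
namespace EllUProof
open Set

lemma pnat_val_image_Iio (a : ℕ+) :
    (fun x : ℕ+ => (x : ℕ)) '' Set.Iio a = ↑(Finset.Ico 1 (a : ℕ)) := by
  ext m
  simp only [Set.mem_image, Set.mem_Iio, Finset.coe_Ico, Set.mem_Ico]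
  constructor
  · rintro ⟨x, hx, rfl⟩
    exact ⟨x.2, by exact_mod_cast hx⟩
  · rintro ⟨h1, h2⟩
    exact ⟨⟨m, h1⟩, by exact_mod_cast h2, rfl⟩

lemma ncard_Iio_pnat (a : ℕ+) : (Set.Iio a).ncard = (a : ℕ) - 1 := by
  have := Set.ncard_image_of_injective (Set.Iio a)
    (fun x y h => PNat.coe_injective h : Function.Injective (fun x : ℕ+ => (x : ℕ)))
  rw [pnat_val_image_Iio, Set.ncard_coe_finset, Nat.card_Ico] at this
  omega

lemma pnat_val_image_Iic (a : ℕ+) :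
    (fun x : ℕ+ => (x : ℕ)) '' Set.Iic a = ↑(Finset.Icc 1 (a : ℕ)) := by
  ext m
  simp only [Set.mem_image, Set.mem_Iic, Finset.coe_Icc, Set.mem_Icc]
  constructor
  · rintro ⟨x, hx, rfl⟩
    exact ⟨x.2, by exact_mod_cast hx⟩
  · rintro ⟨h1, h2⟩
    exact ⟨⟨m, h1⟩, by exact_mod_cast h2, rfl⟩

lemma ncard_Iic_pnat (a : ℕ+) : (Set.Iic a).ncard = (a : ℕ) := by
  have := Set.ncard_image_of_injective (Set.Iic a)
    (fun x y h => PNat.coe_injective h : Function.Injective (fun x : ℕ+ => (x : ℕ)))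
  rw [pnat_val_image_Iic, Set.ncard_coe_finset, Nat.card_Icc] at this
  omega

lemma dc_of_succ {S : Set ℕ+} (h : ∀ s ∈ S, ∀ t : ℕ+, t + 1 = s → t ∈ S) :
    ∀ s ∈ S, ∀ y : ℕ+, y ≤ s → y ∈ S := by
  suffices H : ∀ n : ℕ, ∀ s ∈ S, (s : ℕ) ≤ n → ∀ y : ℕ+, y ≤ s → y ∈ S by
    intro s hs y hy
    exact H (s : ℕ) s hs (le_refl _) y hy
  intro n
  induction n with
  | zero =>
    intro s _ h0
    exact absurd (s.pos.trans_le h0) (lt_irrefl 0)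
  | succ n ih =>
    intro s hs hsn y hy
    rcases eq_or_lt_of_le hy with rfl | hlt
    · exact hs
    · have hys : (y : ℕ) < (s : ℕ) := by exact_mod_cast hlt
      have hs2 : (1 : ℕ) < (s : ℕ) := by have := y.pos; omega
      have hs1 : s ≠ 1 := by
        intro he
        rw [he] at hs2
        simp at hs2
      obtain ⟨t, ht1⟩ : ∃ t : ℕ+, t + 1 = s := by
        obtain ⟨k, hk⟩ := PNat.exists_eq_succ_of_ne_one hs1
        exact ⟨k, hk.symm⟩
      have htcoe : (t : ℕ) + 1 = (s : ℕ) := by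
        rw [← ht1]
        push_cast
        ring
      have htS : t ∈ S := h s hs t ht1
      have htn : (t : ℕ) ≤ n := by omega
      have hyt : y ≤ t := by
        have hc : (y : ℕ) ≤ (t : ℕ) := by omega
        exact_mod_cast hc
      exact ih t htS htn y hyt

lemma gr_dc {S : Set ℕ+} (hS : S.Finite) (hdc : ∀ s ∈ S, ∀ y : ℕ+, y ≤ s → y ∈ S) :
    (∀ a : ℕ+, (a : ℕ) ≤ S.ncard → (1 : Sinf) a ∈ S) ∧
    (∀ b : ℕ+, S.ncard < (b : ℕ) → (1 : Sinf) b ∉ S) ∧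
    (∀ a b : ℕ+, a < b → (1 : Sinf) b < (1 : Sinf) a →
      (a : ℕ) ≤ S.ncard ∧ S.ncard < (b : ℕ)) := by
  refine ⟨?_, ?_, ?_⟩
  · intro a ha
    simp only [Equiv.Perm.one_apply]
    by_contra haS
    have hsub : S ⊆ Set.Iio a := by
      intro s hs
      by_contra hcon
      rw [Set.mem_Iio, not_lt] at hcon
      exact haS (hdc s hs a hcon)
    have hle := Set.ncard_le_ncard hsub (Set.finite_Iio a)
    rw [ncard_Iio_pnat] at hle
    have hapos := a.pos
    omega
  · intro b hb
    simp only [Equiv.Perm.one_apply]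
    intro hbS
    have hsub : Set.Iic b ⊆ S := fun y hy => hdc b hbS y hy
    have hle := Set.ncard_le_ncard hsub hS
    rw [ncard_Iic_pnat] at hle
    omega
  · intro a b hab hdes
    simp only [Equiv.Perm.one_apply] at hdes
    exact absurd hab (not_lt.2 hdes.le)

lemma exists_gr : ∀ (n : ℕ) (S : Set ℕ+) (hS : S.Finite),
    (∑ x ∈ hS.toFinset, (x : ℕ)) ≤ n →
    ∃ g : Sinf, FinSupp g ∧
      (∀ a : ℕ+, (a : ℕ) ≤ S.ncard → g a ∈ S) ∧
      (∀ b : ℕ+, S.ncard < (b : ℕ) → g b ∉ S) ∧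
      (∀ a b : ℕ+, a < b → g b < g a → (a : ℕ) ≤ S.ncard ∧ S.ncard < (b : ℕ)) := by
  intro n
  induction n with
  | zero =>
    intro S hS hsum
    by_cases hsucc : ∀ s ∈ S, ∀ t : ℕ+, t + 1 = s → t ∈ S
    · obtain ⟨p1, p2, p3⟩ := gr_dc hS (dc_of_succ hsucc)
      exact ⟨1, finSupp_one, p1, p2, p3⟩
    · exfalso
      push_neg at hsucc
      obtain ⟨s, hs, t, ht1, htS⟩ := hsucc
      have hmem : s ∈ hS.toFinset := hS.mem_toFinset.2 hs
      have hge := Finset.single_le_sum (f := fun x : ℕ+ => (x : ℕ))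
        (fun x _ => Nat.zero_le _) hmem
      have hge' : (s : ℕ) ≤ ∑ x ∈ hS.toFinset, (x : ℕ) := hge
      have hspos := s.pos
      omega
  | succ n ih =>
    intro S hS hsum
    by_cases hsucc : ∀ s ∈ S, ∀ t : ℕ+, t + 1 = s → t ∈ S
    · obtain ⟨p1, p2, p3⟩ := gr_dc hS (dc_of_succ hsucc)
      exact ⟨1, finSupp_one, p1, p2, p3⟩
    · push_neg at hsucc
      obtain ⟨s, hs, t, ht1, htS⟩ := hsucc
      have hts : t < s := by
        rw [← ht1]
        exact PNat.lt_add_right t 1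
      have htsn : (t : ℕ) + 1 = (s : ℕ) := by
        rw [← ht1]
        push_cast
        ring
      set S' : Set ℕ+ := insert t (S \ {s}) with hS'def
      have hS' : S'.Finite := hS.diff.insert t
      have htnotin : t ∉ S \ {s} := fun h => htS h.1
      have hsnotin : s ∉ S' := by
        intro h
        rcases h with h | h
        · exact absurd h hts.ne'
        · exact h.2 rfl
      have hncard : S'.ncard = S.ncard := by
        have h1 : S'.ncard = (S \ {s}).ncard + 1 :=
          Set.ncard_insert_of_notMem htnotin hS.diff
        have h2 : (S \ {s}).ncard = S.ncard - 1 :=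
          Set.ncard_diff_singleton_of_mem hs
        have h3 : 0 < S.ncard := (Set.ncard_pos hS).2 ⟨s, hs⟩
        omega
      have hfinset : hS'.toFinset = insert t (hS.toFinset.erase s) := by
        ext x
        simp only [Set.Finite.mem_toFinset, hS'def, Set.mem_insert_iff, Set.mem_diff,
          Set.mem_singleton_iff, Finset.mem_insert, Finset.mem_erase]
        tauto
      have hsum' : (∑ x ∈ hS'.toFinset, (x : ℕ)) ≤ n := by
        have htne : t ∉ hS.toFinset.erase s := by
          simp only [Finset.mem_erase, Set.Finite.mem_toFinset]
          exact fun h => htS h.2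
        have e1 : (∑ x ∈ hS'.toFinset, (x : ℕ)) =
            (t : ℕ) + ∑ x ∈ hS.toFinset.erase s, (x : ℕ) := by
          rw [hfinset, Finset.sum_insert htne]
        have e2 : (∑ x ∈ hS.toFinset.erase s, (x : ℕ)) + (s : ℕ) =
            ∑ x ∈ hS.toFinset, (x : ℕ) :=
          Finset.sum_erase_add _ _ (hS.mem_toFinset.2 hs)
        omega
      obtain ⟨g', hg'fin, hg1, hg2, hg3⟩ := ih S' hS' hsum'
      rw [hncard] at hg1 hg2 hg3
      have htS' : t ∈ S' := Set.mem_insert t _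
      refine ⟨Equiv.swap t s * g', finSupp_mul (finSupp_swap t s) hg'fin, ?_, ?_, ?_⟩
      · intro a ha
        have hga' := hg1 a ha
        simp only [Equiv.Perm.mul_apply]
        by_cases h1 : g' a = t
        · rw [h1, Equiv.swap_apply_left]
          exact hs
        · have h2 : g' a ≠ s := fun h => hsnotin (h ▸ hga')
          rw [Equiv.swap_apply_of_ne_of_ne h1 h2]
          rcases hga' with h | h
          · exact absurd h h1
          · exact h.1
      · intro b hb
        have hgb' := hg2 b hb
        simp only [Equiv.Perm.mul_apply]
        by_cases h1 : g' b = s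
        · rw [h1, Equiv.swap_apply_right]
          exact htS
        · by_cases h2 : g' b = t
          · exact absurd (h2 ▸ htS') hgb'
          · rw [Equiv.swap_apply_of_ne_of_ne h2 h1]
            intro hmem
            exact hgb' (Or.inr ⟨hmem, h1⟩)
      · intro a b hab hdes
        simp only [Equiv.Perm.mul_apply] at hdes
        have hne : g' a ≠ g' b := fun h => absurd (g'.injective h) hab.ne
        by_cases h1 : g' a = t
        · by_cases h2 : g' b = s
          · -- the created descent: straddles automatically
            constructor
            · by_contra hcon
              push_neg at hcon
              exact hg2 a hcon (h1 ▸ htS')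
            · by_contra hcon
              push_neg at hcon
              exact hsnotin (h2 ▸ hg1 b hcon)
          · have h3 : g' b ≠ t := fun h => hne (h1.trans h.symm)
            rw [h1, Equiv.swap_apply_left, Equiv.swap_apply_of_ne_of_ne h3 h2] at hdes
            have hbt : g' b < t := by
              have hbs : (g' b : ℕ) < (s : ℕ) := by exact_mod_cast hdes
              have : (g' b : ℕ) ≠ (t : ℕ) := fun h => h3 (PNat.coe_injective h)
              have : (g' b : ℕ) < (t : ℕ) := by omega
              exact_mod_cast this
            exact hg3 a b hab (hbt.trans_le (le_of_eq h1.symm))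
        · by_cases h2 : g' b = t
          · rw [h2, Equiv.swap_apply_left] at hdes
            by_cases h3 : g' a = s
            · rw [h3, Equiv.swap_apply_right] at hdes
              exact absurd hts (not_lt.2 hdes.le)
            · rw [Equiv.swap_apply_of_ne_of_ne h1 h3] at hdes
              have : g' b < g' a := h2 ▸ (hts.trans hdes)
              exact hg3 a b hab this
          · by_cases h3 : g' a = s
            · rw [h3, Equiv.swap_apply_right, Equiv.swap_apply_of_ne_of_ne h2
                (fun h => hne (h3.trans h.symm))] at hdes
              have : g' b < g' a := by
                rw [h3]
                exact hdes.trans hts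
              exact hg3 a b hab this
            · by_cases h4 : g' b = s
              · rw [h4, Equiv.swap_apply_right, Equiv.swap_apply_of_ne_of_ne h1 h3] at hdes
                have hga : s < g' a := by
                  have h5 : (t : ℕ) < (g' a : ℕ) := by exact_mod_cast hdes
                  have h6 : (g' a : ℕ) ≠ (s : ℕ) := fun h => h3 (PNat.coe_injective h)
                  have : (s : ℕ) < (g' a : ℕ) := by omega
                  exact_mod_cast this
                exact hg3 a b hab (h4 ▸ hga)
              · rw [Equiv.swap_apply_of_ne_of_ne h1 h3,
                  Equiv.swap_apply_of_ne_of_ne h2 h4] at hdes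
                exact hg3 a b hab hdes

end EllUProof
end
noncomputable section
namespace EllUProof
open Set

lemma exists_pair (ζ : Sinf) (hζ : FinSupp ζ) :
    ∃ p : Sinf × ℕ+, FinSupp p.1 ∧ kBruhat p.2 p.1 (ζ * p.1) := by
  by_cases h1 : ζ = 1
  · refine ⟨(1, 1), finSupp_one, ?_⟩
    rw [h1, one_mul]
    exact Relation.ReflTransGen.refl
  · have hsupp : {i : ℕ+ | ζ i ≠ i}.Nonempty := by
      by_contra h
      rw [Set.not_nonempty_iff_eq_empty] at h
      apply h1
      apply Equiv.ext
      intro x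
      by_contra hx
      exact absurd (Set.mem_setOf_eq ▸ hx : x ∈ {i : ℕ+ | ζ i ≠ i}) (h ▸ Set.notMem_empty x)
    have hSsub : upS ζ ⊆ {i : ℕ+ | ζ i ≠ i} := by
      intro j hj hjx
      have hj' : ζ⁻¹ j < j := hj
      have heq : ζ⁻¹ j = j :=
        calc ζ⁻¹ j = ζ⁻¹ (ζ j) := by rw [hjx]
          _ = j := ζ.symm_apply_apply j
      rw [heq] at hj'
      exact absurd hj' (lt_irrefl j)
    have hSfin : (upS ζ).Finite := hζ.subset hSsub
    obtain ⟨j, hjsupp, hjmax⟩ := Set.exists_max_image _ (fun x : ℕ+ => x) hζ hsupp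
    have hjinv_supp : ζ⁻¹ j ∈ {i : ℕ+ | ζ i ≠ i} := by
      simp only [Set.mem_setOf_eq, ← Equiv.Perm.mul_apply, mul_inv_cancel, Equiv.Perm.one_apply]
      intro h
      have h2 : ζ j = ζ (ζ⁻¹ j) := by rw [← h]
      rw [← Equiv.Perm.mul_apply, mul_inv_cancel, Equiv.Perm.one_apply] at h2
      exact hjsupp h2
    have hjup : j ∈ upS ζ := by
      have hle : ζ⁻¹ j ≤ j := hjmax _ hjinv_supp
      have hne : ζ⁻¹ j ≠ j := by
        intro h
        have h2 : ζ j = ζ (ζ⁻¹ j) := by rw [h]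
        rw [← Equiv.Perm.mul_apply, mul_inv_cancel, Equiv.Perm.one_apply] at h2
        exact hjsupp h2
      exact lt_of_le_of_ne hle hne
    have hk0 : 0 < (upS ζ).ncard := (Set.ncard_pos hSfin).2 ⟨j, hjup⟩
    set k : ℕ+ := ⟨(upS ζ).ncard, hk0⟩ with hk
    obtain ⟨g, hgfin, hg1, hg2, hg3⟩ :=
      exists_gr (∑ x ∈ hSfin.toFinset, (x : ℕ)) (upS ζ) hSfin (le_refl _)
    set u : Sinf := ζ⁻¹ * g with hu
    have hufin : FinSupp u := finSupp_mul (finSupp_inv hζ) hgfin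
    have hzu : ζ * u = g := by
      rw [hu, ← mul_assoc]
      simp
    refine ⟨(u, k), hufin, ?_⟩
    simp only
    rw [hzu]
    have hkcoe : (k : ℕ) = (upS ζ).ncard := rfl
    apply kBruhat_of_conditions hufin hgfin
    · intro a hak
      have ha' : (a : ℕ) ≤ (upS ζ).ncard := by
        rw [← hkcoe]
        exact_mod_cast hak
      have hga := hg1 a ha'
      have : ζ⁻¹ (g a) < g a := hga
      simpa [hu, Equiv.Perm.mul_apply] using this.le
    · intro b hbk
      have hb' : (upS ζ).ncard < (b : ℕ) := by
        rw [← hkcoe]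
        exact_mod_cast hbk
      have hgb := hg2 b hb'
      have : ¬ ζ⁻¹ (g b) < g b := hgb
      simpa [hu, Equiv.Perm.mul_apply] using (not_lt.1 this)
    · intro a b hab hasc hdes
      obtain ⟨hc1, hc2⟩ := hg3 a b hab hdes
      constructor
      · rw [← hkcoe] at hc1
        exact_mod_cast hc1
      · rw [← hkcoe] at hc2
        exact_mod_cast hc2

end EllUProof
end
/-- The explicit formula for `ℓᵤ(ζ)`. -/
theorem ellU_formula (ζ : Sinf) (hζ : FinSupp ζ) :
    (ellU ζ : ℤ) =
      ({p : ℕ+ × ℕ+ | p.1 ∈ upS ζ ∧ p.2 ∈ dwS ζ ∧ p.2 < p.1}.ncard : ℤ) -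
      ({p : ℕ+ × ℕ+ | p.1 ∈ Set.image (⇑(ζ⁻¹)) (upS ζ) ∧
          p.2 ∈ Set.image (⇑(ζ⁻¹)) (dwS ζ) ∧ p.2 < p.1}.ncard : ℤ) -
      ({p : ℕ+ × ℕ+ | p.1 ∈ Set.image (⇑(ζ⁻¹)) (upS ζ) ∧
          p.2 ∈ Set.image (⇑(ζ⁻¹)) (upS ζ) ∧ p.1 < p.2 ∧ ζ p.2 < ζ p.1}.ncard : ℤ) -
      ({p : ℕ+ × ℕ+ | p.1 ∈ Set.image (⇑(ζ⁻¹)) (dwS ζ) ∧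
          p.2 ∈ Set.image (⇑(ζ⁻¹)) (dwS ζ) ∧ p.1 < p.2 ∧ ζ p.2 < ζ p.1}.ncard : ℤ) := by
  have hex : ∃ p : Sinf × ℕ+, FinSupp p.1 ∧ kBruhat p.2 p.1 (ζ * p.1) :=
    EllUProof.exists_pair ζ hζ
  unfold ellU
  rw [dif_pos hex]
  obtain ⟨hfs, hch⟩ := hex.choose_spec
  obtain ⟨hle, heq⟩ := EllUProof.master hζ hfs hch
  rw [Nat.cast_sub hle]
  exact heq
end

section
/- Let u <_k w in the k-Bruhat order. A maximal chain u = u_0 <_k u_1 <_k ··· <_k u_n = w in the interval [u,w]_k equals the CM-chain of [u,w]_k if and only if the chain has no inversions. -/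
/-!
Along a chain of `k`-Bruhat covers `c i ⋖ c i * swap (A i) (B i)`, values at left positions
(`≤ k`) only increase and values at right positions only decrease, and counting inversions shows
that `c i (A i) < c i (B i)` with no value of `c i` in between at a position in between.
Given this, condition (I) at every step says exactly that the final values `w (A i)` weakly
decrease, and then condition (II) says that along each block of steps sharing a left position
the final values `w (B i)` weakly increase, which is the absence of inversions.
-/

open Equiv Set

def invSet (u : Sinf) : Set (ℕ+ × ℕ+) := {x | x.1 < x.2 ∧ u x.2 < u x.1}

lemma len_eq_ncard_invSet (u : Sinf) : len u = (invSet u).ncard := rfl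

lemma FinSupp.mul_swap {u : Sinf} (hu : FinSupp u) (a b : ℕ+) : FinSupp (u * swap a b) := by
  refine (hu.union (toFinite {a, b})).subset fun i hi => ?_
  by_contra! h
  simp only [mem_union, mem_ofPred_eq, mem_insert_iff, mem_singleton_iff, not_or, not_not] at h
  exact hi (by rw [Perm.mul_apply, swap_apply_of_ne_of_ne h.2.1 h.2.2, h.1])

lemma FinSupp.finite_invSet {u : Sinf} (hu : FinSupp u) : (invSet u).Finite := by
  obtain ⟨N, hN⟩ := hu.bddAbove
  have fixed : ∀ i, N < i → u i = i := fun i hi => by_contra fun h => (hN h).not_gt hi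
  have maps_le : ∀ i, i ≤ N → u i ≤ N := fun i hi => by
    by_contra! h
    rw [u.injective (fixed _ h)] at h
    exact h.not_ge hi
  refine ((finite_Iic N).prod (finite_Iic N)).subset fun ⟨p, q⟩ ⟨hpq, hinv⟩ => ?_
  have hq : q ≤ N := by
    by_contra! hq
    have hp : N < p := by
      by_contra! hp
      exact (maps_le p hp).not_gt (hq.trans_le ((fixed q hq).symm ▸ hinv.le))
    exact hinv.not_gt (by rw [fixed p hp, fixed q hq]; exact hpq)
  exact ⟨hpq.le.trans hq, hq⟩

section SwapCount

variable {u : Sinf} {a b : ℕ+}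

/-- Fixes the pairs whose order `swap a b` reverses and moves every other pair by `swap a b`;
it carries the inversions of `u` to inversions of `u * swap a b` when `u a < u b`. -/
def swapPairMap (a b : ℕ+) (x : ℕ+ × ℕ+) : ℕ+ × ℕ+ :=
  if (x.1 = a ∧ x.2 ≤ b) ∨ (x.2 = b ∧ a ≤ x.1) then x else (swap a b x.1, swap a b x.2)

lemma injOn_swapPairMap : InjOn (swapPairMap a b) {x | x.1 < x.2} := by
  rintro ⟨p, q⟩ hpq ⟨p', q'⟩ hpq' h
  simp only [mem_ofPred_eq] at hpq hpq'
  simp only [swapPairMap, swap_apply_def] at h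
  split_ifs at h <;> grind

lemma mapsTo_swapPairMap (hab : a < b) (hlt : u a < u b) {c : ℕ+} (hcb : c ≤ b)
    (hac' : u a < u c) :
    MapsTo (swapPairMap a b) (invSet u) (invSet (u * swap a b) \ {(a, b), (a, c)}) := by
  rintro ⟨p, q⟩ ⟨hpq, hinv⟩
  simp only [swapPairMap, invSet, mem_sdiff, mem_ofPred_eq, mem_insert_iff, mem_singleton_iff,
    Perm.mul_apply, swap_apply_def] at hinv hpq ⊢
  split_ifs <;> grind [u.injective.eq_iff]

lemma len_add_ncard_le_len_mul_swap (hab : a < b) (hlt : u a < u b) {c : ℕ+} (hac : a < c)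
    (hcb : c ≤ b) (hac' : u a < u c) (hcb' : u c ≤ u b)
    (hfin : (invSet (u * swap a b)).Finite) :
    len u + ({(a, b), (a, c)} : Set (ℕ+ × ℕ+)).ncard ≤ len (u * swap a b) := by
  have hsub : ({(a, b), (a, c)} : Set (ℕ+ × ℕ+)) ⊆ invSet (u * swap a b) := by
    have hab_mem : (a, b) ∈ invSet (u * swap a b) :=
      ⟨hab, by simpa [Perm.mul_apply] using hlt⟩
    rintro x (rfl | rfl)
    · exact hab_mem
    rcases hcb.lt_or_eq with hcb | rfl
    · refine ⟨hac, ?_⟩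
      simpa [Perm.mul_apply, swap_apply_of_ne_of_ne hac.ne' hcb.ne] using
        hcb'.lt_of_ne (u.injective.ne hcb.ne)
    · exact hab_mem
  have hle := ncard_le_ncard_of_injOn _ (mapsTo_swapPairMap hab hlt hcb hac')
    (injOn_swapPairMap.mono fun x hx => hx.1) hfin.sdiff
  have := ncard_sdiff_add_ncard_of_subset hsub hfin
  rw [len_eq_ncard_invSet, len_eq_ncard_invSet]
  omega

lemma len_lt_len_mul_swap (hab : a < b) (hlt : u a < u b)
    (hfin : (invSet (u * swap a b)).Finite) : len u < len (u * swap a b) := by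
  have := len_add_ncard_le_len_mul_swap hab hlt hab le_rfl hlt le_rfl hfin
  rwa [pair_eq_singleton, ncard_singleton, Nat.add_one_le_iff] at this

lemma len_add_two_le_len_mul_swap {c : ℕ+} (hac : a < c) (hcb : c < b) (hac' : u a < u c)
    (hcb' : u c < u b) (hfin : (invSet (u * swap a b)).Finite) :
    len u + 2 ≤ len (u * swap a b) := by
  have := len_add_ncard_le_len_mul_swap (hac.trans hcb) (hac'.trans hcb') hac hcb.le hac'
    hcb'.le hfin
  rwa [ncard_pair (by simpa using hcb.ne')] at this

lemma apply_lt_apply_of_len_mul_swap (hab : a < b) (hu : (invSet u).Finite)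
    (hlen : len (u * swap a b) = len u + 1) : u a < u b := by
  by_contra! h
  have hlt : (u * swap a b) a < (u * swap a b) b := by
    simpa [Perm.mul_apply] using h.lt_of_ne (u.injective.ne hab.ne')
  have := len_lt_len_mul_swap hab hlt (by rwa [mul_swap_mul_self])
  rw [mul_swap_mul_self] at this
  omega

lemma not_between_of_len_mul_swap (hv : (invSet (u * swap a b)).Finite)
    (hlen : len (u * swap a b) = len u + 1) {p : ℕ+} (hap : a < p) (hpb : p < b) :
    ¬(u a < u p ∧ u p < u b) := fun ⟨h₁, h₂⟩ => by
  have := len_add_two_le_len_mul_swap hap hpb h₁ h₂ hv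
  omega

end SwapCount

/-- A chain of `k`-Bruhat covers `c i ⋖ c (i + 1) = c i * swap (A i) (B i)`, `i < n`, described by
the combinatorial cover criterion instead of lengths (see `IsCoverChain.of_kCover`). -/
structure IsCoverChain (k : ℕ+) (n : ℕ) (c : ℕ → Sinf) (A B : ℕ → ℕ+) : Prop where
  mul_swap : ∀ i < n, c (i + 1) = c i * swap (A i) (B i)
  left_le : ∀ i < n, A i ≤ k
  lt_right : ∀ i < n, k < B i
  apply_left_lt : ∀ i < n, c i (A i) < c i (B i)
  not_between : ∀ i < n, ∀ p, A i < p → p < B i →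
    ¬(c i (A i) < c i p ∧ c i p < c i (B i))

namespace IsCoverChain

variable {k : ℕ+} {n : ℕ} {c : ℕ → Sinf} {A B : ℕ → ℕ+} {i j : ℕ} {p q : ℕ+}

lemma of_kCover (hc₀ : FinSupp (c 0))
    (hstep : ∀ i < n, kCover k (c i) (c (i + 1)) ∧ A i ≤ k ∧ k < B i ∧
      c (i + 1) = c i * swap (A i) (B i)) :
    IsCoverChain k n c A B := by
  have hfin : ∀ i ≤ n, FinSupp (c i) := by
    intro i hi
    induction i with
    | zero => exact hc₀
    | succ i ih => rw [(hstep i hi).2.2.2]; exact (ih (by omega)).mul_swap _ _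
  have hlen : ∀ i < n, len (c i * swap (A i) (B i)) = len (c i) + 1 := fun i hi => by
    rw [← (hstep i hi).2.2.2]; exact (hstep i hi).1.1
  have hAB : ∀ i < n, A i < B i := fun i hi => (hstep i hi).2.1.trans_lt (hstep i hi).2.2.1
  refine ⟨fun i hi => (hstep i hi).2.2.2, fun i hi => (hstep i hi).2.1,
    fun i hi => (hstep i hi).2.2.1, fun i hi => ?_, fun i hi => ?_⟩
  · exact apply_lt_apply_of_len_mul_swap (hAB i hi) (hfin i hi.le).finite_invSet (hlen i hi)
  · exact fun p => not_between_of_len_mul_swap ((hfin i hi.le).mul_swap _ _).finite_invSet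
      (hlen i hi)

lemma apply_succ_of_ne (hc : IsCoverChain k n c A B) (hi : i < n) (hA : p ≠ A i)
    (hB : p ≠ B i) : c (i + 1) p = c i p := by
  rw [hc.mul_swap i hi, Perm.mul_apply, swap_apply_of_ne_of_ne hA hB]

lemma apply_succ_left (hc : IsCoverChain k n c A B) (hi : i < n) :
    c (i + 1) (A i) = c i (B i) := by
  rw [hc.mul_swap i hi, Perm.mul_apply, swap_apply_left]

lemma apply_succ_right (hc : IsCoverChain k n c A B) (hi : i < n) :
    c (i + 1) (B i) = c i (A i) := by
  rw [hc.mul_swap i hi, Perm.mul_apply, swap_apply_right]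

lemma ne_left_of_lt (hc : IsCoverChain k n c A B) (hi : i < n) (hp : k < p) : p ≠ A i :=
  ((hc.left_le i hi).trans_lt hp).ne'

lemma ne_right_of_le (hc : IsCoverChain k n c A B) (hi : i < n) (hp : p ≤ k) : p ≠ B i :=
  (hp.trans_lt (hc.lt_right i hi)).ne

lemma apply_right_lt_of_between (hc : IsCoverChain k n c A B) (hi : i < n) (hAp : A i < p)
    (hpB : p < B i) (h : c i (A i) < c i p) : c i (B i) < c i p :=
  (not_lt.mp fun h' => hc.not_between i hi p hAp hpB ⟨h, h'⟩).lt_of_ne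
    ((c i).injective.ne hpB.ne')

lemma apply_lt_left_of_between (hc : IsCoverChain k n c A B) (hi : i < n) (hAp : A i < p)
    (hpB : p < B i) (h : c i p < c i (B i)) : c i p < c i (A i) :=
  (not_lt.mp fun h' => hc.not_between i hi p hAp hpB ⟨h', h⟩).lt_of_ne
    ((c i).injective.ne hAp.ne')

lemma apply_le_apply_succ (hc : IsCoverChain k n c A B) (hi : i < n) (hp : p ≤ k) :
    c i p ≤ c (i + 1) p := by
  rcases eq_or_ne p (A i) with rfl | hA
  · exact (hc.apply_succ_left hi).symm ▸ (hc.apply_left_lt i hi).le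
  · exact (hc.apply_succ_of_ne hi hA (hc.ne_right_of_le hi hp)).ge

lemma apply_succ_le_apply (hc : IsCoverChain k n c A B) (hi : i < n) (hp : k < p) :
    c (i + 1) p ≤ c i p := by
  rcases eq_or_ne p (B i) with rfl | hB
  · exact (hc.apply_succ_right hi).symm ▸ (hc.apply_left_lt i hi).le
  · exact (hc.apply_succ_of_ne hi (hc.ne_left_of_lt hi hp) hB).le

lemma apply_le_apply_of_le (hc : IsCoverChain k n c A B) (hp : p ≤ k) (hij : i ≤ j)
    (hjn : j ≤ n) : c i p ≤ c j p :=
  monotoneOn_of_le_succ (f := fun i => c i p) ordConnected_Iic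
    (fun _ _ _ hl => hc.apply_le_apply_succ (Order.succ_le_iff.mp hl) hp)
    (hij.trans hjn : i ≤ n) (hjn : j ≤ n) hij

lemma apply_le_apply_of_lt (hc : IsCoverChain k n c A B) (hp : k < p) (hij : i ≤ j)
    (hjn : j ≤ n) : c j p ≤ c i p :=
  antitoneOn_of_succ_le (f := fun i => c i p) ordConnected_Iic
    (fun _ _ _ hl => hc.apply_succ_le_apply (Order.succ_le_iff.mp hl) hp)
    (hij.trans hjn : i ≤ n) (hjn : j ≤ n) hij

lemma apply_eq_of_forall_ne (hc : IsCoverChain k n c A B) (hij : i ≤ j) (hjn : j ≤ n)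
    (h : ∀ l, i ≤ l → l < j → p ≠ A l ∧ p ≠ B l) : c j p = c i p := by
  induction j, hij using Nat.le_induction with
  | base => rfl
  | succ j hij ih =>
    rw [hc.apply_succ_of_ne hjn (h j hij j.lt_add_one).1 (h j hij j.lt_add_one).2,
      ih (by omega) fun l hil hlj => h l hil (by omega)]

lemma exists_left_eq_of_apply_ne (hc : IsCoverChain k n c A B) (hp : p ≤ k) (hi : i ≤ n)
    (hne : c i p ≠ c n p) : ∃ j, i ≤ j ∧ j < n ∧ A j = p := by
  by_contra! h
  exact hne (hc.apply_eq_of_forall_ne hi le_rfl fun l hil hln =>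
    ⟨(h l hil hln).symm, hc.ne_right_of_le hln hp⟩).symm

lemma exists_right_eq_of_apply_ne (hc : IsCoverChain k n c A B) (hp : k < p) (hi : i ≤ n)
    (hne : c i p ≠ c n p) : ∃ j, i ≤ j ∧ j < n ∧ B j = p ∧ c j p = c i p := by
  have hex : ∃ j, i ≤ j ∧ j < n ∧ B j = p := by
    by_contra! h
    exact hne (hc.apply_eq_of_forall_ne hi le_rfl fun l hil hln =>
      ⟨hc.ne_left_of_lt hln hp, (h l hil hln).symm⟩).symm
  obtain ⟨hij, hjn, hB⟩ := Nat.find_spec hex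
  refine ⟨Nat.find hex, hij, hjn, hB, hc.apply_eq_of_forall_ne hij hjn.le fun l hil hlj => ?_⟩
  exact ⟨hc.ne_left_of_lt (hlj.trans hjn) hp,
    fun hpB => Nat.find_min hex hlj ⟨hil, hlj.trans hjn, hpB.symm⟩⟩

lemma apply_succ_lt_apply_succ (hc : IsCoverChain k n c A B) (hi : i < n) (hp : k < p)
    (hpq : p < q) (h : c i p < c i q) : c (i + 1) p < c (i + 1) q := by
  have hqA := hc.ne_left_of_lt hi (hp.trans hpq)
  rcases eq_or_ne p (B i) with rfl | hpB
  · rw [hc.apply_succ_right hi, hc.apply_succ_of_ne hi hqA hpq.ne']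
    exact (hc.apply_left_lt i hi).trans h
  rw [hc.apply_succ_of_ne hi (hc.ne_left_of_lt hi hp) hpB]
  rcases eq_or_ne q (B i) with rfl | hqB
  · rw [hc.apply_succ_right hi]
    exact hc.apply_lt_left_of_between hi ((hc.left_le i hi).trans_lt hp) hpq h
  · rwa [hc.apply_succ_of_ne hi hqA hqB]

lemma apply_lt_apply_of_lt (hc : IsCoverChain k n c A B) (hp : k < p) (hpq : p < q)
    (hij : i ≤ j) (hjn : j ≤ n) (h : c i p < c i q) : c j p < c j q := by
  induction j, hij using Nat.le_induction with
  | base => exact h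
  | succ j _ ih => exact hc.apply_succ_lt_apply_succ hjn hp hpq (ih (by omega))

end IsCoverChain

def HasNoInversions (w : Sinf) (n : ℕ) (A B : ℕ → ℕ+) : Prop :=
  ∀ i j : ℕ, i < j → j < n →
    ¬(w (A i) < w (A j) ∨ (w (A i) = w (A j) ∧ w (B j) < w (B i)))

/-- `(a, b)` is the pair chosen at `v` by conditions (I) and (II) of the CM-chain towards `w`. -/
def IsCMStep (k : ℕ+) (v w : Sinf) (a b : ℕ+) : Prop :=
  (v a < w a ∧ ∀ j : ℕ+, j ≤ k → v j < w j → w j ≤ w a) ∧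
    (v a < v b ∧ w b ≤ v a ∧
      ∀ j : ℕ+, k < j → v a < v j → w j ≤ v a → w b ≤ w j)

namespace HasNoInversions

variable {w : Sinf} {n : ℕ} {A B : ℕ → ℕ+} {i j : ℕ}

lemma apply_left_le (h : HasNoInversions w n A B) (hij : i ≤ j) (hjn : j < n) :
    w (A j) ≤ w (A i) := by
  rcases hij.eq_or_lt with rfl | hij
  · exact le_rfl
  · exact not_lt.mp fun hlt => h i j hij hjn (.inl hlt)

lemma apply_right_le (h : HasNoInversions w n A B) (hij : i < j) (hjn : j < n)
    (hA : A i = A j) : w (B i) ≤ w (B j) :=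
  not_lt.mp fun hlt => h i j hij hjn (.inr ⟨by rw [hA], hlt⟩)

lemma left_ne_of_left_succ_ne (h : HasNoInversions w n A B)
    (hA : i + 1 < n → A (i + 1) ≠ A i) : ∀ l, i < l → l < n → A l ≠ A i := by
  intro l hil hln hl
  have hlt : w (A (i + 1)) < w (A i) :=
    (h.apply_left_le i.le_succ (by omega)).lt_of_ne (w.injective.ne (hA (by omega)))
  exact (h.apply_left_le hil hln).not_gt (hl ▸ hlt)

end HasNoInversions

namespace IsCoverChain

variable {k : ℕ+} {n : ℕ} {c : ℕ → Sinf} {A B : ℕ → ℕ+} {i j : ℕ} {q : ℕ+}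

lemma apply_right_le_final_left (hc : IsCoverChain k n c A B) (hj : j < n) :
    c j (B j) ≤ c n (A j) :=
  hc.apply_succ_left hj ▸ hc.apply_le_apply_of_le (hc.left_le j hj) hj le_rfl

lemma apply_lt_final_left (hc : IsCoverChain k n c A B) (hij : i ≤ j) (hj : j < n) :
    c i (A j) < c n (A j) :=
  calc c i (A j) ≤ c j (A j) := hc.apply_le_apply_of_le (hc.left_le j hj) hij hj.le
    _ < c j (B j) := hc.apply_left_lt j hj
    _ ≤ c n (A j) := hc.apply_right_le_final_left hj

lemma final_right_le (hc : IsCoverChain k n c A B) (hi : i < n) : c n (B i) ≤ c i (A i) :=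
  hc.apply_succ_right hi ▸ hc.apply_le_apply_of_lt (hc.lt_right i hi) hi le_rfl

lemma apply_left_lt_apply_right (hc : IsCoverChain k n c A B) (hij : i ≤ j) (hj : j < n) :
    c i (A j) < c i (B j) :=
  calc c i (A j) ≤ c j (A j) := hc.apply_le_apply_of_le (hc.left_le j hj) hij hj.le
    _ < c j (B j) := hc.apply_left_lt j hj
    _ ≤ c i (B j) := hc.apply_le_apply_of_lt (hc.lt_right j hj) hij hj.le

lemma final_left_eq (hc : IsCoverChain k n c A B) (hi : i < n)
    (h : ∀ l, i < l → l < n → A l ≠ A i) : c n (A i) = c i (B i) :=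
  hc.apply_succ_left hi ▸ hc.apply_eq_of_forall_ne hi le_rfl fun l hil hln =>
    ⟨(h l hil hln).symm, hc.ne_right_of_le hln (hc.left_le i hi)⟩

/-- If the left position `A i` is never touched after step `i`, it ends with the value
`c i (B i)`; a right position `q` holding a larger value cannot drop afterwards, since the step
moving it would leave a larger final value at a later left position. -/
lemma final_eq_of_forall_left_ne (hc : IsCoverChain k n c A B)
    (hNI : HasNoInversions (c n) n A B) (hi : i < n) (h : ∀ l, i < l → l < n → A l ≠ A i)
    (hq : k < q) (hqB : q ≠ B i) (hlt : c i (B i) < c i q) : c n q = c i q := by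
  have hq' : c (i + 1) q = c i q := hc.apply_succ_of_ne hi (hc.ne_left_of_lt hi hq) hqB
  by_contra hne
  obtain ⟨j, hij, hjn, rfl, hj⟩ :=
    hc.exists_right_eq_of_apply_ne hq hi (by rwa [hq', ne_comm])
  have := calc c i (B j) = c j (B j) := by rw [hj, hq']
    _ ≤ c n (A j) := hc.apply_right_le_final_left hjn
    _ ≤ c n (A i) := hNI.apply_left_le (by omega) hjn
    _ = c i (B i) := hc.final_left_eq hi h
  exact this.not_gt hlt

/-- Downward induction on `i`: while the next step shares the left position `A i` the claim
passes to it; otherwise `final_eq_of_forall_left_ne` leaves no candidate `q` below `B i`. -/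
lemma final_right_le_of_hasNoInversions (hc : IsCoverChain k n c A B)
    (hNI : HasNoInversions (c n) n A B) (hi : i < n) (hq : k < q) (h₁ : c i (A i) < c i q)
    (h₂ : c n q ≤ c i (A i)) : c n (B i) ≤ c n q := by
  have hin := hi.le
  induction hin using Nat.decreasingInduction generalizing q with
  | self => exact absurd hi (lt_irrefl n)
  | of_succ i _ ih =>
    have hAq := (hc.left_le i hi).trans_lt hq
    rcases lt_trichotomy q (B i) with hqB | rfl | hBq
    · have hBq := hc.apply_right_lt_of_between hi hAq hqB h₁
      by_cases hA : i + 1 < n ∧ A (i + 1) = A i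
      · have e : c (i + 1) (A (i + 1)) = c i (B i) := hA.2 ▸ hc.apply_succ_left hi
        have hq' : c (i + 1) q = c i q := hc.apply_succ_of_ne hi hAq.ne' hqB.ne
        calc c n (B i) ≤ c n (B (i + 1)) := hNI.apply_right_le i.lt_add_one hA.1 hA.2.symm
          _ ≤ c n q := ih hA.1 hq (by rw [e, hq']; exact hBq)
            (by rw [e]; exact h₂.trans (hc.apply_left_lt i hi).le)
      · have hfix := hc.final_eq_of_forall_left_ne hNI hi
          (hNI.left_ne_of_left_succ_ne (not_and.mp hA)) hq hqB.ne hBq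
        exact absurd (hfix ▸ h₂) h₁.not_ge
    · exact le_rfl
    · have h : c (i + 1) (B i) < c (i + 1) q := by
        rwa [hc.apply_succ_right hi, hc.apply_succ_of_ne hi hAq.ne' hBq.ne']
      exact (hc.apply_lt_apply_of_lt (hc.lt_right i hi) hBq hi le_rfl h).le

lemma isCMStep_of_hasNoInversions (hc : IsCoverChain k n c A B)
    (hNI : HasNoInversions (c n) n A B) (hi : i < n) : IsCMStep k (c i) (c n) (A i) (B i) := by
  refine ⟨⟨hc.apply_lt_final_left le_rfl hi, fun p hp hlt => ?_⟩, hc.apply_left_lt i hi,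
    hc.final_right_le hi, fun q hq => hc.final_right_le_of_hasNoInversions hNI hi hq⟩
  obtain ⟨j, hij, hjn, rfl⟩ := hc.exists_left_eq_of_apply_ne hp hi.le hlt.ne
  exact hNI.apply_left_le hij hjn

lemma hasNoInversions_of_isCMStep (hc : IsCoverChain k n c A B)
    (hCM : ∀ i < n, IsCMStep k (c i) (c n) (A i) (B i)) : HasNoInversions (c n) n A B := by
  intro i j hij hjn
  obtain ⟨⟨-, hmax⟩, -, hBle, hBmin⟩ := hCM i (hij.trans hjn)
  rintro (hlt | ⟨heq, hlt⟩)
  · exact (hmax (A j) (hc.left_le j hjn) (hc.apply_lt_final_left hij.le hjn)).not_gt hlt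
  · have hA : A i = A j := (c n).injective heq
    refine hlt.not_ge ?_
    by_cases hB : c n (B j) ≤ c i (A i)
    · exact hBmin (B j) (hc.lt_right j hjn) (hA ▸ hc.apply_left_lt_apply_right hij.le hjn) hB
    · exact hBle.trans (not_le.mp hB).le

end IsCoverChain

theorem CM_chain_iff_no_inversions_general (k : ℕ+) (u w : Sinf) (hu : FinSupp u)
    (n : ℕ) (c : ℕ → Sinf) (A B : ℕ → ℕ+)
    (hc0 : c 0 = u) (hcn : c n = w)
    (hstep : ∀ i < n, kCover k (c i) (c (i + 1)) ∧ A i ≤ k ∧ k < B i ∧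
      c (i + 1) = c i * Equiv.swap (A i) (B i)) :
    -- no inversions
    (∀ i j : ℕ, i < j → j < n →
      ¬(w (A i) < w (A j) ∨ (w (A i) = w (A j) ∧ w (B j) < w (B i))))
    ↔
    -- each step satisfies conditions I and II of the CM-chain recursion
    (∀ i < n,
      (c i (A i) < w (A i) ∧
        ∀ j : ℕ+, j ≤ k → c i j < w j → w j ≤ w (A i)) ∧
      (c i (A i) < c i (B i) ∧ w (B i) ≤ c i (A i) ∧
        ∀ j : ℕ+, k < j → c i (A i) < c i j → w j ≤ c i (A i) → w (B i) ≤ w j)) := by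
  subst hc0 hcn
  have hc : IsCoverChain k n c A B := .of_kCover hu hstep
  exact ⟨fun hNI i hi => hc.isCMStep_of_hasNoInversions hNI hi, hc.hasNoInversions_of_isCMStep⟩

/-- A maximal chain `u = c 0 <ₖ c 1 <ₖ ⋯ <ₖ c n = w` of
`[u,w]ₖ`, with `c (i+1) = (c i)·(A i, B i)`, is the CM-chain (each step
satisfies conditions I and II of the recursive definition) iff it has no
inversions. -/
theorem CM_chain_iff_no_inversions (k : ℕ+) (u w : Sinf) (hu : FinSupp u)
    (huw : kBruhat k u w) (hne : u ≠ w)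
    (n : ℕ) (c : ℕ → Sinf) (A B : ℕ → ℕ+)
    (hc0 : c 0 = u) (hcn : c n = w)
    (hstep : ∀ i < n, kCover k (c i) (c (i + 1)) ∧ A i ≤ k ∧ k < B i ∧
      c (i + 1) = c i * Equiv.swap (A i) (B i)) :
    -- no inversions
    (∀ i j : ℕ, i < j → j < n →
      ¬(w (A i) < w (A j) ∨ (w (A i) = w (A j) ∧ w (B j) < w (B i))))
    ↔
    -- each step satisfies conditions I and II of the CM-chain recursion
    (∀ i < n,
      (c i (A i) < w (A i) ∧
        ∀ j : ℕ+, j ≤ k → c i j < w j → w j ≤ w (A i)) ∧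
      (c i (A i) < c i (B i) ∧ w (B i) ≤ c i (A i) ∧
        ∀ j : ℕ+, k < j → c i (A i) < c i j → w j ≤ c i (A i) → w (B i) ≤ w j)) :=
  CM_chain_iff_no_inversions_general k u w hu n c A B hc0 hcn hstep
end
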